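/- arXiv:2509.19490 — 10 statements merged into one kernel-verified Lean document; each statement's English description precedes it below -/
import Mathlib

section
/- Let (G_t)_{t=0}^m be a filtration on a probability space, let (H_t, α_t, φ_t)_{t=0}^m be a conditionally valid testing sequence with respect to (G_t)_{t=0}^m, and let (α_t)_{t=0}^m be a valid α-budget with respect to (G_t)_{t=0}^m. Define the first rejected index τ := min{t : φ_t = 1}, with τ = ∞ if no φ_t equals 1, and set H_∞ := 1. Then P(H_τ = 0) ≤ α. Furthermore, if the testing sequence is conditionally exact, the α-budget is exact, and H_t = 0 almost surely for all t = 0,…,m, then P(H_τ = 0) = α. -/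
open MeasureTheory ProbabilityTheory Filter

/-!
Write `τ` for the first rejected index, `D_t = ∏_{s<t} (1 - α_s)` and `w_t = (1 - α) / D_t`.
By the budget `D_{m+1} ≥ 1 - α`, so `0 ≤ w_t ≤ 1` and `w_t = w_{t+1} (1 - α_t)`, while `w_{t+1}`
is known when `φ_t` is drawn. Conditional validity at step `t` then shows that the potential
`∑_{s<t} P(τ = s, H_s = 0) + E[1_{τ ≥ t} (1 - w_t)]` does not increase with `t`; it equals `α` at
`t = 0` and dominates `P(H_τ = 0)` at `t = m + 1`.

In the exact case with all `H_t = 0`, the same computation gives `E[1_{τ ≥ t} w_t] = 1 - α` for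
every `t`, and `w_{m+1} = 1`, so `P(τ = ∞) = 1 - α`. When `α = 1` the weights vanish and one
argues instead that a test at level `1` rejects almost surely, so `P(τ = ∞) = 0`.
-/

namespace SequentialTest

variable {Ω : Type*}

section Events

variable (R : ℕ → Set Ω)

/-- `{τ ≥ t}` for the index `τ` of the first rejection, where `R s = {φ_s = 1}`. -/
def noRejectionBefore (t : ℕ) : Set Ω := ⋂ s ∈ Finset.range t, (R s)ᶜ

/-- `{τ = t}`. -/
def firstRejection (t : ℕ) : Set Ω := R t ∩ noRejectionBefore R t

@[simp]
lemma noRejectionBefore_zero : noRejectionBefore R 0 = Set.univ := by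
  simp [noRejectionBefore]

lemma noRejectionBefore_succ (t : ℕ) :
    noRejectionBefore R (t + 1) = noRejectionBefore R t \ R t := by
  ext ω
  simp [noRejectionBefore, Finset.range_add_one, and_comm]

lemma noRejectionBefore_antitone : Antitone (noRejectionBefore R) :=
  antitone_nat_of_succ_le fun t => by
    rw [noRejectionBefore_succ]
    exact Set.sdiff_subset

lemma measurableSet_noRejectionBefore {M : MeasurableSpace Ω} {t : ℕ}
    (hR : ∀ s < t, MeasurableSet[M] (R s)) : MeasurableSet[M] (noRejectionBefore R t) :=
  .biInter (Set.to_countable _) fun s hs => (hR s (Finset.mem_range.1 hs)).compl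

lemma disjoint_firstRejection {s t : ℕ} (hst : s < t) :
    Disjoint (firstRejection R s) (firstRejection R t) := by
  refine Set.disjoint_left.2 fun ω hs ht => ?_
  have : ω ∈ noRejectionBefore R (s + 1) := noRejectionBefore_antitone R hst ht.2
  rw [noRejectionBefore_succ] at this
  exact this.2 hs.1

lemma pairwise_disjoint_firstRejection :
    Pairwise fun s t => Disjoint (firstRejection R s) (firstRejection R t) := by
  intro s t hst
  rcases Nat.lt_or_gt_of_ne hst with h | h
  exacts [disjoint_firstRejection R h, (disjoint_firstRejection R h).symm]

lemma biUnion_firstRejection (n : ℕ) :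
    ⋃ t ∈ Finset.range n, firstRejection R t = (noRejectionBefore R n)ᶜ := by
  induction n with
  | zero => simp
  | succ n ih =>
    rw [Finset.range_add_one, Finset.set_biUnion_insert, ih, noRejectionBefore_succ,
      firstRejection]
    ext ω
    simp only [Set.mem_union, Set.mem_inter_iff, Set.mem_compl_iff, Set.mem_sdiff]
    tauto

end Events

/-- The information available when `φ_t` is drawn: `σ(G_t, φ_0, …, φ_{t-1})`. -/
abbrev history (G : ℕ → MeasurableSpace Ω) (R : ℕ → Set Ω) (t : ℕ) : MeasurableSpace Ω :=
  G t ⊔ ⨆ s ∈ Finset.range t, MeasurableSpace.generateFrom {R s}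

section History

variable {G : ℕ → MeasurableSpace Ω} {R : ℕ → Set Ω} {t : ℕ}

lemma le_history : G t ≤ history G R t := le_sup_left

lemma measurableSet_history_of_lt {s : ℕ} (hst : s < t) : MeasurableSet[history G R t] (R s) :=
  have h : MeasurableSpace.generateFrom {R s} ≤ history G R t :=
    le_sup_of_le_right (le_biSup (fun s => MeasurableSpace.generateFrom {R s})
      (Finset.mem_range.2 hst))
  h _ (MeasurableSpace.measurableSet_generateFrom rfl)

lemma measurableSet_noRejectionBefore_history :
    MeasurableSet[history G R t] (noRejectionBefore R t) :=
  measurableSet_noRejectionBefore R fun _ => measurableSet_history_of_lt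

lemma history_le {m0 : MeasurableSpace Ω} (hG : G t ≤ m0) (hR : ∀ s < t, MeasurableSet (R s)) :
    history G R t ≤ m0 :=
  sup_le hG <| iSup₂_le fun s hs => MeasurableSpace.generateFrom_le <| by
    rintro _ rfl
    exact hR s (Finset.mem_range.1 hs)

end History

section Budget

variable (a : ℕ → Ω → ℝ)

def survivalProd (t : ℕ) (ω : Ω) : ℝ := ∏ s ∈ Finset.range t, (1 - a s ω)

/-- The share of the non-rejection budget `1 - α` left for the tests `t, t + 1, …`; for an exact
budget it is `∏_{t ≤ s ≤ m} (1 - α_s)`. -/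
noncomputable def weight (α : ℝ) (t : ℕ) (ω : Ω) : ℝ := (1 - α) / survivalProd a t ω

@[simp]
lemma survivalProd_zero (ω : Ω) : survivalProd a 0 ω = 1 := by simp [survivalProd]

lemma survivalProd_succ (t : ℕ) (ω : Ω) :
    survivalProd a (t + 1) ω = survivalProd a t ω * (1 - a t ω) :=
  Finset.prod_range_succ _ _

lemma measurable_survivalProd {M : MeasurableSpace Ω} {t : ℕ}
    (ha : ∀ s < t, Measurable[M] (a s)) :
    Measurable[M] (survivalProd a t) :=
  Finset.measurable_prod _ fun s hs => measurable_const.sub (ha s (Finset.mem_range.1 hs))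

variable {a} {ω : Ω} {n : ℕ}

lemma survivalProd_nonneg (ha : ∀ s < n, a s ω ∈ Set.Icc 0 1) {t : ℕ} (ht : t ≤ n) :
    0 ≤ survivalProd a t ω :=
  Finset.prod_nonneg fun s hs => sub_nonneg.2 (ha s (by grind)).2

lemma survivalProd_le_of_le (ha : ∀ s < n, a s ω ∈ Set.Icc 0 1) {u v : ℕ} (huv : u ≤ v)
    (hv : v ≤ n) : survivalProd a v ω ≤ survivalProd a u ω := by
  induction v, huv using Nat.le_induction with
  | base => exact le_rfl
  | succ v huv ih =>
    rw [survivalProd_succ]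
    exact (mul_le_of_le_one_right (survivalProd_nonneg ha (by omega))
      (by linarith [(ha v (by omega)).1])).trans (ih (by omega))

variable {α : ℝ}

lemma weight_mem_Icc (ha : ∀ s < n, a s ω ∈ Set.Icc 0 1) (hα : α ≤ 1)
    (hD : 1 - α ≤ survivalProd a n ω) {t : ℕ} (ht : t ≤ n) : weight a α t ω ∈ Set.Icc 0 1 := by
  have hDt : 1 - α ≤ survivalProd a t ω := hD.trans (survivalProd_le_of_le ha ht le_rfl)
  exact ⟨div_nonneg (by linarith) (by linarith), div_le_one_of_le₀ hDt (by linarith)⟩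

lemma weight_succ_mul (ha : ∀ s < n, a s ω ∈ Set.Icc 0 1) (hα : α ≤ 1)
    (hD : 1 - α ≤ survivalProd a n ω) {t : ℕ} (ht : t < n) :
    weight a α (t + 1) ω * (1 - a t ω) = weight a α t ω := by
  rcases eq_or_ne (1 - a t ω) 0 with h | h
  · -- then `∏_{s < n} (1 - α_s) = 0`, which forces `α = 1`
    have hD0 : survivalProd a n ω ≤ 0 := by
      simpa [survivalProd_succ, h] using survivalProd_le_of_le ha (Nat.succ_le_of_lt ht) le_rfl
    simp [weight, show α = 1 by linarith]
  · rw [weight, weight, survivalProd_succ, div_mul_eq_mul_div, mul_div_mul_right _ _ h]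

end Budget

section CondExp

variable {F : MeasurableSpace Ω} [m0 : MeasurableSpace Ω] {μ : Measure Ω} [IsFiniteMeasure μ]
  {v : Ω → ℝ} {c : ℝ}

lemma integral_mul_condExp (hF : F ≤ m0) (hv : StronglyMeasurable[F] v)
    (hvc : ∀ᵐ ω ∂μ, ‖v ω‖ ≤ c) {f : Ω → ℝ} (hf : Integrable f μ) :
    ∫ ω, v ω * (μ[f | F]) ω ∂μ = ∫ ω, v ω * f ω ∂μ := by
  rw [← integral_condExp hF (f := fun ω => v ω * f ω)]
  exact integral_congr_ae (condExp_stronglyMeasurable_mul_of_bound hF hv hf c hvc).symm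

lemma integral_mul_indicator_eq_of_condExp_eq (hF : F ≤ m0) {R : Set Ω} (hR : MeasurableSet R)
    (hv : StronglyMeasurable[F] v) (hvc : ∀ᵐ ω ∂μ, ‖v ω‖ ≤ c) {b : Ω → ℝ}
    (hb : ∀ᵐ ω ∂μ, v ω ≠ 0 → (μ[R.indicator (fun _ => 1) | F]) ω = b ω) :
    ∫ ω, v ω * R.indicator (fun _ => 1) ω ∂μ = ∫ ω, v ω * b ω ∂μ := by
  rw [← integral_mul_condExp hF hv hvc ((integrable_const 1).indicator hR)]
  refine integral_congr_ae ?_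
  filter_upwards [hb] with ω hω
  by_cases hv0 : v ω = 0
  · simp [hv0]
  · rw [hω hv0]

lemma integral_mul_indicator_le_of_condExp_le (hF : F ≤ m0) {R : Set Ω} (hR : MeasurableSet R)
    (hv : StronglyMeasurable[F] v) (hv0 : ∀ᵐ ω ∂μ, 0 ≤ v ω) (hvc : ∀ᵐ ω ∂μ, ‖v ω‖ ≤ c)
    {b : Ω → ℝ} (hbi : Integrable b μ)
    (hb : ∀ᵐ ω ∂μ, v ω ≠ 0 → (μ[R.indicator (fun _ => 1) | F]) ω ≤ b ω) :
    ∫ ω, v ω * R.indicator (fun _ => 1) ω ∂μ ≤ ∫ ω, v ω * b ω ∂μ := by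
  have hvm : AEStronglyMeasurable v μ := (hv.mono hF).aestronglyMeasurable
  rw [← integral_mul_condExp hF hv hvc ((integrable_const 1).indicator hR)]
  refine integral_mono_ae (integrable_condExp.bdd_mul hvm hvc) (hbi.bdd_mul hvm hvc) ?_
  filter_upwards [hv0, hb] with ω hω0 hω
  by_cases hv0 : v ω = 0
  · simp [hv0]
  · exact mul_le_mul_of_nonneg_left (hω hv0) hω0

end CondExp

/-- Standing assumptions on a testing sequence `(H_t, α_t, φ_t)_{t ≤ m}`, encoded as
`N t = {H_t = 0}`, `R t = {φ_t = 1}` and `a t = α_t`. -/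
structure IsTestingSequence [m0 : MeasurableSpace Ω] (m : ℕ) (G : ℕ → MeasurableSpace Ω)
    (N R : ℕ → Set Ω) (a : ℕ → Ω → ℝ) : Prop where
  mono : ∀ s t : ℕ, s ≤ t → G s ≤ G t
  le : ∀ t, G t ≤ m0
  measurableSet_null : ∀ t ≤ m, MeasurableSet[G t] (N t)
  measurableSet_reject : ∀ t ≤ m, MeasurableSet (R t)
  measurable_level : ∀ t ≤ m, Measurable[G t] (a t)
  level_mem_Icc : ∀ t ≤ m, ∀ ω, a t ω ∈ Set.Icc (0 : ℝ) 1

def IsCondValid [MeasurableSpace Ω] (μ : Measure Ω) (m : ℕ) (G : ℕ → MeasurableSpace Ω)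
    (N R : ℕ → Set Ω) (a : ℕ → Ω → ℝ) : Prop :=
  ∀ t ≤ m, ∀ᵐ ω ∂μ, ω ∈ N t ∩ noRejectionBefore R t →
    (μ[(R t).indicator (fun _ => 1) | history G R t]) ω ≤ a t ω

def IsCondExact [MeasurableSpace Ω] (μ : Measure Ω) (m : ℕ) (G : ℕ → MeasurableSpace Ω)
    (N R : ℕ → Set Ω) (a : ℕ → Ω → ℝ) : Prop :=
  ∀ t ≤ m, ∀ᵐ ω ∂μ, ω ∈ N t ∩ noRejectionBefore R t →
    (μ[(R t).indicator (fun _ => 1) | history G R t]) ω = a t ω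

namespace IsTestingSequence

variable [m0 : MeasurableSpace Ω] {μ : Measure Ω} {m : ℕ}
  {G : ℕ → MeasurableSpace Ω} {N R : ℕ → Set Ω} {a : ℕ → Ω → ℝ} {α : ℝ} {t : ℕ}

lemma history_le (hT : IsTestingSequence m G N R a) (ht : t ≤ m) : history G R t ≤ m0 :=
  SequentialTest.history_le (hT.le t) fun s hs => hT.measurableSet_reject s (by omega)

lemma level_mem_Icc_of_lt (hT : IsTestingSequence m G N R a) (ω : Ω) :
    ∀ s < m + 1, a s ω ∈ Set.Icc 0 1 :=
  fun s hs => hT.level_mem_Icc s (by omega) ω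

lemma integrable_level [IsFiniteMeasure μ] (hT : IsTestingSequence m G N R a) (ht : t ≤ m) :
    Integrable (a t) μ :=
  .of_mem_Icc 0 1 ((hT.measurable_level t ht).mono (hT.le t) le_rfl).aemeasurable
    (ae_of_all _ (hT.level_mem_Icc t ht))

lemma measurable_weight_succ (hT : IsTestingSequence m G N R a) (ht : t ≤ m) :
    Measurable[history G R t] (weight a α (t + 1)) :=
  (measurable_survivalProd a fun s hs =>
    (hT.measurable_level s (by omega)).mono ((hT.mono s t (by omega)).trans le_history) le_rfl
    ).const_div _

lemma measurable_weight (hT : IsTestingSequence m G N R a) (ht : t ≤ m + 1) :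
    Measurable (weight a α t) :=
  (measurable_survivalProd a fun s hs =>
    (hT.measurable_level s (by omega)).mono (hT.le s) le_rfl).const_div _

lemma ae_weight_mem_Icc (hT : IsTestingSequence m G N R a) (hα : α ≤ 1)
    (hbudget : ∀ᵐ ω ∂μ, 1 - survivalProd a (m + 1) ω ≤ α) (ht : t ≤ m + 1) :
    ∀ᵐ ω ∂μ, weight a α t ω ∈ Set.Icc 0 1 := by
  filter_upwards [hbudget] with ω hω
  exact weight_mem_Icc (hT.level_mem_Icc_of_lt ω) hα (by linarith) ht

lemma ae_norm_weight_le (hT : IsTestingSequence m G N R a) (hα : α ≤ 1)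
    (hbudget : ∀ᵐ ω ∂μ, 1 - survivalProd a (m + 1) ω ≤ α) (ht : t ≤ m + 1) :
    ∀ᵐ ω ∂μ, ‖weight a α t ω‖ ≤ 1 := by
  filter_upwards [hT.ae_weight_mem_Icc hα hbudget ht] with ω hω
  rw [Real.norm_eq_abs, abs_le]
  constructor <;> linarith [hω.1, hω.2]

lemma integrable_weight [IsFiniteMeasure μ] (hT : IsTestingSequence m G N R a) (hα : α ≤ 1)
    (hbudget : ∀ᵐ ω ∂μ, 1 - survivalProd a (m + 1) ω ≤ α) (ht : t ≤ m + 1) :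
    Integrable (weight a α t) μ :=
  .of_mem_Icc 0 1 (hT.measurable_weight ht).aemeasurable (hT.ae_weight_mem_Icc hα hbudget ht)

lemma measurableSet_noRejectionBefore (hT : IsTestingSequence m G N R a) (ht : t ≤ m + 1) :
    MeasurableSet (noRejectionBefore R t) :=
  SequentialTest.measurableSet_noRejectionBefore R fun s hs =>
    hT.measurableSet_reject s (by omega)

lemma measurableSet_firstRejection_inter (hT : IsTestingSequence m G N R a) (ht : t ≤ m) :
    MeasurableSet (firstRejection R t ∩ N t) :=
  ((hT.measurableSet_reject t ht).inter (hT.measurableSet_noRejectionBefore (by omega))).inter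
    (hT.le t _ (hT.measurableSet_null t ht))

lemma integral_indicator_weight_mul_le [IsFiniteMeasure μ] (hT : IsTestingSequence m G N R a)
    (hvalid : IsCondValid μ m G N R a) (hα : α ≤ 1)
    (hbudget : ∀ᵐ ω ∂μ, 1 - survivalProd a (m + 1) ω ≤ α) (ht : t ≤ m) :
    ∫ ω, (noRejectionBefore R t ∩ N t).indicator (weight a α (t + 1)) ω
        * (R t).indicator (fun _ => 1) ω ∂μ
      ≤ ∫ ω, (noRejectionBefore R t ∩ N t).indicator (weight a α (t + 1)) ω * a t ω ∂μ := by
  have hA : MeasurableSet[history G R t] (noRejectionBefore R t ∩ N t) :=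
    measurableSet_noRejectionBefore_history.inter (le_history _ (hT.measurableSet_null t ht))
  refine integral_mul_indicator_le_of_condExp_le (hT.history_le ht) (hT.measurableSet_reject t ht)
    ((hT.measurable_weight_succ ht).indicator hA).stronglyMeasurable ?_ (c := 1) ?_
    (hT.integrable_level ht) ?_
  · filter_upwards [hT.ae_weight_mem_Icc hα hbudget (t := t + 1) (by omega)] with ω hω
    exact Set.indicator_apply_nonneg fun _ => hω.1
  · filter_upwards [hT.ae_norm_weight_le hα hbudget (t := t + 1) (by omega)] with ω hω
    exact (norm_indicator_le_norm_self _ _).trans hω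
  · filter_upwards [hvalid t ht] with ω hω hv0
    exact hω (Set.mem_of_indicator_ne_zero hv0).symm

lemma measureReal_firstRejection_inter_add_le [IsFiniteMeasure μ]
    (hT : IsTestingSequence m G N R a) (hvalid : IsCondValid μ m G N R a) (hα : α ≤ 1)
    (hbudget : ∀ᵐ ω ∂μ, 1 - survivalProd a (m + 1) ω ≤ α) (ht : t ≤ m) :
    μ.real (firstRejection R t ∩ N t)
        + ∫ ω in noRejectionBefore R (t + 1), (1 - weight a α (t + 1) ω) ∂μ
      ≤ ∫ ω in noRejectionBefore R t, (1 - weight a α t ω) ∂μ := by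
  set v := (noRejectionBefore R t ∩ N t).indicator (weight a α (t + 1)) with hv
  have hpt : ∀ᵐ ω ∂μ, (firstRejection R t ∩ N t).indicator 1 ω
        + (noRejectionBefore R (t + 1)).indicator (fun ω => 1 - weight a α (t + 1) ω) ω
        + v ω * a t ω
      ≤ (noRejectionBefore R t).indicator (fun ω => 1 - weight a α t ω) ω
        + v ω * (R t).indicator (fun _ => 1) ω := by
    filter_upwards [hT.ae_weight_mem_Icc hα hbudget (t := t + 1) (by omega), hbudget]
      with ω hω hD
    have hsucc := weight_succ_mul (hT.level_mem_Icc_of_lt ω) hα (by linarith)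
      (Nat.lt_succ_of_le ht)
    have ha := hT.level_mem_Icc t ht ω
    rw [noRejectionBefore_succ, hv, firstRejection]
    by_cases hC : ω ∈ noRejectionBefore R t <;> by_cases hN : ω ∈ N t <;>
      by_cases hR : ω ∈ R t <;> simp [hC, hN, hR] <;> nlinarith [hω.1, hω.2, ha.1, ha.2]
  have hC := hT.measurableSet_noRejectionBefore (t := t) (by omega)
  have hC' := hT.measurableSet_noRejectionBefore (t := t + 1) (by omega)
  have hE := hT.measurableSet_firstRejection_inter ht
  have hv_aesm : AEStronglyMeasurable v μ :=
    ((hT.measurable_weight (by omega)).indicator (hC.inter (hT.le t _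
      (hT.measurableSet_null t ht)))).aestronglyMeasurable
  have hv_bound : ∀ᵐ ω ∂μ, ‖v ω‖ ≤ 1 := by
    filter_upwards [hT.ae_norm_weight_le hα hbudget (t := t + 1) (by omega)] with ω hω
    exact (norm_indicator_le_norm_self _ _).trans hω
  have h1 : Integrable ((firstRejection R t ∩ N t).indicator (1 : Ω → ℝ)) μ :=
    (integrable_const 1).indicator hE
  have h2 : Integrable ((noRejectionBefore R (t + 1)).indicator
      fun ω => 1 - weight a α (t + 1) ω) μ :=
    ((integrable_const 1).sub (hT.integrable_weight hα hbudget (by omega))).indicator hC'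
  have h3 : Integrable (fun ω => v ω * (R t).indicator (fun _ => 1) ω) μ :=
    ((integrable_const 1).indicator (hT.measurableSet_reject t ht)).bdd_mul hv_aesm hv_bound
  have h4 : Integrable (fun ω => v ω * a t ω) μ :=
    (hT.integrable_level ht).bdd_mul hv_aesm hv_bound
  have hg : Integrable ((noRejectionBefore R t).indicator fun ω => 1 - weight a α t ω) μ :=
    ((integrable_const 1).sub (hT.integrable_weight hα hbudget ht.step)).indicator hC
  have hmono := integral_mono_ae ((h1.add h2).add h4) (hg.add h3) hpt
  rw [integral_add' (h1.add h2) h4, integral_add' h1 h2, integral_add' hg h3,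
    integral_indicator_one hE, integral_indicator hC', integral_indicator hC] at hmono
  linarith [hT.integral_indicator_weight_mul_le hvalid hα hbudget ht]

lemma sum_measureReal_add_setIntegral_le [IsProbabilityMeasure μ]
    (hT : IsTestingSequence m G N R a) (hvalid : IsCondValid μ m G N R a) (hα : α ≤ 1)
    (hbudget : ∀ᵐ ω ∂μ, 1 - survivalProd a (m + 1) ω ≤ α) {u : ℕ} (hu : u ≤ m + 1) :
    ∑ t ∈ Finset.range u, μ.real (firstRejection R t ∩ N t)
      + ∫ ω in noRejectionBefore R u, (1 - weight a α u ω) ∂μ ≤ α := by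
  induction u with
  | zero => simp [weight]
  | succ u ih =>
    rw [Finset.sum_range_succ]
    linarith [ih (by omega),
      hT.measureReal_firstRejection_inter_add_le hvalid hα hbudget (t := u) (by omega)]

lemma sum_measureReal_firstRejection_inter_le [IsProbabilityMeasure μ]
    (hT : IsTestingSequence m G N R a) (hvalid : IsCondValid μ m G N R a) (hα : α ≤ 1)
    (hbudget : ∀ᵐ ω ∂μ, 1 - survivalProd a (m + 1) ω ≤ α) :
    ∑ t ∈ Finset.range (m + 1), μ.real (firstRejection R t ∩ N t) ≤ α := by
  have hrest : 0 ≤ ∫ ω in noRejectionBefore R (m + 1), (1 - weight a α (m + 1) ω) ∂μ := by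
    refine integral_nonneg_of_ae (ae_restrict_of_ae ?_)
    filter_upwards [hT.ae_weight_mem_Icc hα hbudget le_rfl] with ω hω
    exact sub_nonneg.2 hω.2
  linarith [hT.sum_measureReal_add_setIntegral_le hvalid hα hbudget le_rfl]

lemma measureReal_biUnion_firstRejection_inter [IsFiniteMeasure μ]
    (hT : IsTestingSequence m G N R a) :
    μ.real (⋃ t ∈ Finset.range (m + 1), firstRejection R t ∩ N t)
      = ∑ t ∈ Finset.range (m + 1), μ.real (firstRejection R t ∩ N t) :=
  measureReal_biUnion_finset
    (fun s _ t _ hst => ((pairwise_disjoint_firstRejection R hst).mono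
      Set.inter_subset_left Set.inter_subset_left))
    fun t ht => hT.measurableSet_firstRejection_inter (by grind)

lemma setIntegral_noRejectionBefore_succ [IsFiniteMeasure μ] (hT : IsTestingSequence m G N R a)
    (hexact : IsCondExact μ m G N R a) (hnull : ∀ t ≤ m, ∀ᵐ ω ∂μ, ω ∈ N t) (ht : t ≤ m)
    {v : Ω → ℝ} (hv : StronglyMeasurable[history G R t] v) {c : ℝ}
    (hvc : ∀ᵐ ω ∂μ, ‖v ω‖ ≤ c) :
    ∫ ω in noRejectionBefore R (t + 1), v ω ∂μ
      = ∫ ω in noRejectionBefore R t, (1 - a t ω) * v ω ∂μ := by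
  have hF := hT.history_le ht
  have hR := hT.measurableSet_reject t ht
  have hCh := measurableSet_noRejectionBefore_history (G := G) (R := R) (t := t)
  set u := (noRejectionBefore R t).indicator v with hu
  have hu_meas : StronglyMeasurable[history G R t] u := hv.indicator hCh
  have hu_bound : ∀ᵐ ω ∂μ, ‖u ω‖ ≤ c := by
    filter_upwards [hvc] with ω hω
    exact (norm_indicator_le_norm_self _ _).trans hω
  have hu_aesm : AEStronglyMeasurable u μ := (hu_meas.mono hF).aestronglyMeasurable
  have hu_int : Integrable u μ := .of_bound hu_aesm c hu_bound
  have hR_int : Integrable (fun ω => u ω * (R t).indicator (fun _ => 1) ω) μ :=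
    ((integrable_const 1).indicator hR).bdd_mul hu_aesm hu_bound
  have ha_int : Integrable (fun ω => u ω * a t ω) μ :=
    (hT.integrable_level ht).bdd_mul hu_aesm hu_bound
  have hexact_t : ∫ ω, u ω * (R t).indicator (fun _ => 1) ω ∂μ = ∫ ω, u ω * a t ω ∂μ := by
    refine integral_mul_indicator_eq_of_condExp_eq hF hR hu_meas hu_bound ?_
    filter_upwards [hexact t ht, hnull t ht] with ω hω hN hu0
    exact hω ⟨hN, Set.mem_of_indicator_ne_zero hu0⟩
  rw [← integral_indicator (hT.measurableSet_noRejectionBefore (by omega)),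
    ← integral_indicator (hT.measurableSet_noRejectionBefore (by omega))]
  calc ∫ ω, (noRejectionBefore R (t + 1)).indicator v ω ∂μ
      = ∫ ω, (u ω - u ω * (R t).indicator (fun _ => 1) ω) ∂μ := by
        congr 1
        ext ω
        rw [noRejectionBefore_succ, hu]
        by_cases hC : ω ∈ noRejectionBefore R t <;> by_cases hRω : ω ∈ R t <;> simp [hC, hRω]
    _ = ∫ ω, (u ω - u ω * a t ω) ∂μ := by
        rw [integral_sub hu_int hR_int, integral_sub hu_int ha_int, hexact_t]
    _ = ∫ ω, (noRejectionBefore R t).indicator (fun ω => (1 - a t ω) * v ω) ω ∂μ := by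
        congr 1
        ext ω
        rw [hu]
        by_cases hC : ω ∈ noRejectionBefore R t <;> simp [hC]
        ring

lemma setIntegral_weight [IsProbabilityMeasure μ] (hT : IsTestingSequence m G N R a)
    (hexact : IsCondExact μ m G N R a) (hnull : ∀ t ≤ m, ∀ᵐ ω ∂μ, ω ∈ N t) (hα : α ≤ 1)
    (hbudget : ∀ᵐ ω ∂μ, 1 - survivalProd a (m + 1) ω ≤ α) {u : ℕ} (hu : u ≤ m + 1) :
    ∫ ω in noRejectionBefore R u, weight a α u ω ∂μ = 1 - α := by
  induction u with
  | zero => simp [weight]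
  | succ u ih =>
    rw [hT.setIntegral_noRejectionBefore_succ hexact hnull (by omega)
      (hT.measurable_weight_succ (by omega)).stronglyMeasurable
      (hT.ae_norm_weight_le hα hbudget hu), ← ih (by omega)]
    refine setIntegral_congr_ae (hT.measurableSet_noRejectionBefore (by omega)) ?_
    filter_upwards [hbudget] with ω hD _
    rw [mul_comm]
    exact weight_succ_mul (hT.level_mem_Icc_of_lt ω) hα (by linarith) (by omega)

lemma measureReal_noRejectionBefore_of_lt_one [IsProbabilityMeasure μ]
    (hT : IsTestingSequence m G N R a) (hexact : IsCondExact μ m G N R a)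
    (hnull : ∀ t ≤ m, ∀ᵐ ω ∂μ, ω ∈ N t) (hα : α < 1)
    (hbudget : ∀ᵐ ω ∂μ, 1 - survivalProd a (m + 1) ω = α) :
    μ.real (noRejectionBefore R (m + 1)) = 1 - α := by
  have hC := hT.measurableSet_noRejectionBefore (t := m + 1) le_rfl
  rw [← hT.setIntegral_weight hexact hnull hα.le (hbudget.mono fun _ h => h.le) le_rfl]
  calc μ.real (noRejectionBefore R (m + 1))
      = ∫ _ in noRejectionBefore R (m + 1), (1 : ℝ) ∂μ := by simp
    _ = _ := by
      refine setIntegral_congr_ae hC ?_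
      filter_upwards [hbudget] with ω hω _
      rw [weight, show survivalProd a (m + 1) ω = 1 - α by linarith,
        div_self (by linarith)]

lemma measure_noRejectionBefore_eq_zero [IsFiniteMeasure μ] (hT : IsTestingSequence m G N R a)
    (hexact : IsCondExact μ m G N R a) (hnull : ∀ t ≤ m, ∀ᵐ ω ∂μ, ω ∈ N t)
    (hbudget : ∀ᵐ ω ∂μ, survivalProd a (m + 1) ω = 0) :
    μ (noRejectionBefore R (m + 1)) = 0 := by
  -- a test at level `1` that has not been preceded by a rejection rejects almost surely
  have hfull : ∀ s ≤ m, μ (noRejectionBefore R (s + 1) ∩ a s ⁻¹' {1}) = 0 := by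
    intro s hs
    have hG : MeasurableSet[G s] (a s ⁻¹' {1}) :=
      hT.measurable_level s hs (measurableSet_singleton 1)
    have h := hT.setIntegral_noRejectionBefore_succ hexact hnull hs
      (v := (a s ⁻¹' {1}).indicator 1) (c := 1)
      ((measurable_const.indicator (le_history _ hG)).stronglyMeasurable)
      (ae_of_all _ fun ω => by by_cases hω : ω ∈ a s ⁻¹' {1} <;> simp [hω])
    have hzero : ∀ ω, (1 - a s ω) * (a s ⁻¹' {1}).indicator 1 ω = 0 := fun ω => by
      by_cases hω : a s ω = 1 <;> simp [hω]
    simp only [hzero, integral_zero, setIntegral_indicator (hT.le s _ hG), Pi.one_apply,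
      setIntegral_const, smul_eq_mul, mul_one] at h
    exact (measureReal_eq_zero_iff).1 h
  refine measure_mono_null_ae ?_
    ((measure_biUnion_null_iff (Finset.range (m + 1)).countable_toSet).2
      fun s hs => hfull s (by grind))
  filter_upwards [hbudget] with ω hω hC
  obtain ⟨s, hs, has⟩ := Finset.prod_eq_zero_iff.1 hω
  exact Set.mem_biUnion hs
    ⟨noRejectionBefore_antitone R (by grind) hC, by simp; linarith⟩

lemma measure_biUnion_firstRejection_inter_le [IsProbabilityMeasure μ]
    (hT : IsTestingSequence m G N R a) (hvalid : IsCondValid μ m G N R a)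
    (hbudget : ∀ᵐ ω ∂μ, 1 - survivalProd a (m + 1) ω ≤ α) :
    μ (⋃ t ∈ Finset.range (m + 1), firstRejection R t ∩ N t) ≤ ENNReal.ofReal α := by
  rcases le_or_gt α 1 with hα | hα
  · rw [← ofReal_measureReal (measure_ne_top μ _), hT.measureReal_biUnion_firstRejection_inter]
    exact ENNReal.ofReal_le_ofReal (hT.sum_measureReal_firstRejection_inter_le hvalid hα hbudget)
  · exact prob_le_one.trans (ENNReal.ofReal_one ▸ ENNReal.ofReal_le_ofReal hα.le)

lemma measureReal_noRejectionBefore_eq [IsProbabilityMeasure μ]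
    (hT : IsTestingSequence m G N R a) (hexact : IsCondExact μ m G N R a)
    (hnull : ∀ t ≤ m, ∀ᵐ ω ∂μ, ω ∈ N t)
    (hbudget : ∀ᵐ ω ∂μ, 1 - survivalProd a (m + 1) ω = α) :
    μ.real (noRejectionBefore R (m + 1)) = 1 - α := by
  have hα : α ≤ 1 := by
    obtain ⟨ω, hω⟩ := hbudget.exists
    linarith [survivalProd_nonneg (hT.level_mem_Icc_of_lt ω) le_rfl]
  rcases hα.lt_or_eq with hα | rfl
  · exact hT.measureReal_noRejectionBefore_of_lt_one hexact hnull hα hbudget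
  · rw [measureReal_def, hT.measure_noRejectionBefore_eq_zero hexact hnull
      (hbudget.mono fun _ h => by linarith)]
    simp

lemma measure_biUnion_firstRejection_inter_eq [IsProbabilityMeasure μ]
    (hT : IsTestingSequence m G N R a) (hexact : IsCondExact μ m G N R a)
    (hnull : ∀ t ≤ m, ∀ᵐ ω ∂μ, ω ∈ N t)
    (hbudget : ∀ᵐ ω ∂μ, 1 - survivalProd a (m + 1) ω = α) :
    μ (⋃ t ∈ Finset.range (m + 1), firstRejection R t ∩ N t) = ENNReal.ofReal α := by
  have hae : (⋃ t ∈ Finset.range (m + 1), firstRejection R t ∩ N t : Set Ω)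
      =ᵐ[μ] ((noRejectionBefore R (m + 1))ᶜ : Set Ω) := by
    rw [← biUnion_firstRejection]
    filter_upwards [(eventually_all_finset (Finset.range (m + 1))).2 fun t ht =>
      hnull t (by grind)] with ω hω
    change (ω ∈ ⋃ t ∈ Finset.range (m + 1), firstRejection R t ∩ N t)
      = (ω ∈ ⋃ t ∈ Finset.range (m + 1), firstRejection R t)
    simp only [Set.mem_iUnion, Set.mem_inter_iff, eq_iff_iff]
    exact ⟨fun ⟨t, ht, hF, _⟩ => ⟨t, ht, hF⟩, fun ⟨t, ht, hF⟩ => ⟨t, ht, hF, hω t ht⟩⟩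
  rw [measure_congr hae, ← ofReal_measureReal (measure_ne_top μ _),
    measureReal_compl (hT.measurableSet_noRejectionBefore le_rfl),
    hT.measureReal_noRejectionBefore_eq hexact hnull hbudget]
  simp

end IsTestingSequence

end SequentialTest

/-- **Sequential error control.** For a conditionally valid testing sequence
`(H_t, α_t, φ_t)_{t=0}^m` with respect to a filtration `(G_t)_{t=0}^m`, with a valid
`α`-budget `(α_t)`, rejecting the first rejected hypothesis `H_τ` controls Type I error:
`P(H_τ = 0) ≤ α`.  Here `N t = {H_t = 0}` and `R t = {φ_t = 1}`, so that
`{H_τ = 0} = ⋃_{t ≤ m} ({τ = t} ∩ N t)` (recall `H_∞ = 1`).  Furthermore, if the testing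
sequence is conditionally exact, the `α`-budget is exact, and every `H_t = 0` almost
surely, then `P(H_τ = 0) = α`. -/
theorem sequential_error_control
    {Ω : Type*} [m0 : MeasurableSpace Ω] (μ : Measure Ω) [IsProbabilityMeasure μ]
    (m : ℕ) (G : ℕ → MeasurableSpace Ω)
    (hG_mono : ∀ s t : ℕ, s ≤ t → G s ≤ G t) (hG_le : ∀ t, G t ≤ m0)
    (N R : ℕ → Set Ω) (a : ℕ → Ω → ℝ) (α : ℝ)
    (hN_meas : ∀ t ≤ m, MeasurableSet[G t] (N t))
    (hR_meas : ∀ t ≤ m, MeasurableSet (R t))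
    (ha_meas : ∀ t ≤ m, Measurable[G t] (a t))
    (ha_mem : ∀ t ≤ m, ∀ ω, a t ω ∈ Set.Icc (0 : ℝ) 1)
    -- `(α_t)_{t=0}^m` is a valid `α`-budget
    (hbudget : ∀ᵐ ω ∂μ, 1 - ∏ t ∈ Finset.range (m + 1), (1 - a t ω) ≤ α)
    -- `(H_t, α_t, φ_t)_{t=0}^m` is a conditionally valid testing sequence:
    -- `P(φ_t = 1 | σ(G_t, φ_0, …, φ_{t-1})) ≤ α_t` a.s. on `{H_t = 0, max_{s<t} φ_s = 0}`
    (hvalid : ∀ t ≤ m, ∀ᵐ ω ∂μ,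
      ω ∈ N t ∩ ⋂ s ∈ Finset.range t, (R s)ᶜ →
        (μ[(R t).indicator (fun _ => (1 : ℝ)) |
            (G t ⊔ ⨆ s ∈ Finset.range t, MeasurableSpace.generateFrom {R s})]) ω
          ≤ a t ω) :
    μ (⋃ t ∈ Finset.range (m + 1),
        ((R t ∩ ⋂ s ∈ Finset.range t, (R s)ᶜ) ∩ N t)) ≤ ENNReal.ofReal α ∧
    ((∀ t ≤ m, ∀ᵐ ω ∂μ,
        ω ∈ N t ∩ ⋂ s ∈ Finset.range t, (R s)ᶜ →
          (μ[(R t).indicator (fun _ => (1 : ℝ)) |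
              (G t ⊔ ⨆ s ∈ Finset.range t, MeasurableSpace.generateFrom {R s})]) ω
            = a t ω) →
      (∀ᵐ ω ∂μ, 1 - ∏ t ∈ Finset.range (m + 1), (1 - a t ω) = α) →
      (∀ t ≤ m, ∀ᵐ ω ∂μ, ω ∈ N t) →
      μ (⋃ t ∈ Finset.range (m + 1),
          ((R t ∩ ⋂ s ∈ Finset.range t, (R s)ᶜ) ∩ N t)) = ENNReal.ofReal α) := by
  have hT : SequentialTest.IsTestingSequence m G N R a :=
    ⟨hG_mono, hG_le, hN_meas, hR_meas, ha_meas, ha_mem⟩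
  exact ⟨hT.measure_biUnion_firstRejection_inter_le hvalid hbudget,
    fun hexact hbudget_eq hnull =>
      hT.measure_biUnion_firstRejection_inter_eq hexact hnull hbudget_eq⟩
end

section
/- Let Z ∼ Binomial(n, p₁) and Z' ∼ Binomial(n, p₂) with 0 ≤ p₁ ≤ p₂ ≤ 1. Then for all real c and γ for which the conditioning events {Z ≤ γ} and {Z' ≤ γ} have positive probability, P(Z ≤ c | Z ≤ γ) ≥ P(Z' ≤ c | Z' ≤ γ). Moreover, the inequality remains true when the constant c is replaced by a random variable C independent of Z and Z', i.e. P(Z ≤ C | Z ≤ γ) ≥ P(Z' ≤ C | Z' ≤ γ). -/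
open MeasureTheory ProbabilityTheory Finset

private lemma pow_key {p₁ p₂ : ℝ} (hp₁ : 0 ≤ p₁) (hp : p₁ ≤ p₂) (hp₂ : p₂ ≤ 1)
    (j d nn : ℕ) :
    p₂ ^ j * (1 - p₂) ^ (nn + d) * (p₁ ^ (j + d) * (1 - p₁) ^ nn)
      ≤ p₁ ^ j * (1 - p₁) ^ (nn + d) * (p₂ ^ (j + d) * (1 - p₂) ^ nn) := by
  have h1 : 0 ≤ 1 - p₁ := by linarith
  have h2 : 0 ≤ 1 - p₂ := by linarith
  have h0 : 0 ≤ p₂ := le_trans hp₁ hp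
  have hmono : (p₁ * (1 - p₂)) ^ d ≤ (p₂ * (1 - p₁)) ^ d :=
    pow_le_pow_left₀ (by positivity) (by nlinarith) d
  calc p₂ ^ j * (1 - p₂) ^ (nn + d) * (p₁ ^ (j + d) * (1 - p₁) ^ nn)
      = (p₁ ^ j * p₂ ^ j * (1 - p₁) ^ nn * (1 - p₂) ^ nn) * (p₁ * (1 - p₂)) ^ d := by
        rw [pow_add, pow_add, mul_pow]; ring
    _ ≤ (p₁ ^ j * p₂ ^ j * (1 - p₁) ^ nn * (1 - p₂) ^ nn) * (p₂ * (1 - p₁)) ^ d :=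
        mul_le_mul_of_nonneg_left hmono (by positivity)
    _ = p₁ ^ j * (1 - p₁) ^ (nn + d) * (p₂ ^ (j + d) * (1 - p₂) ^ nn) := by
        rw [pow_add, pow_add, mul_pow]; ring

private lemma cheby (s : Finset ℕ) (a b q : ℕ → ℝ)
    (hab : ∀ j ∈ s, ∀ l ∈ s, j ≤ l → b j * a l ≤ a j * b l)
    (hq : ∀ j ∈ s, ∀ l ∈ s, j ≤ l → q l ≤ q j) :
    (∑ k ∈ s, b k * q k) * (∑ k ∈ s, a k) ≤ (∑ k ∈ s, a k * q k) * (∑ k ∈ s, b k) := by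
  set F : ℕ → ℕ → ℝ := fun j l => (a j * b l - b j * a l) * q j with hF
  have hpair : ∀ j ∈ s, ∀ l ∈ s, 0 ≤ F j l + F l j := by
    intro j hj l hl
    rcases le_total j l with h | h
    · have h1 := hab j hj l hl h
      have h2 := hq j hj l hl h
      simp only [hF]; nlinarith
    · have h1 := hab l hl j hj h
      have h2 := hq l hl j hj h
      simp only [hF]; nlinarith
  have hcomm : ∑ j ∈ s, ∑ l ∈ s, F j l = ∑ j ∈ s, ∑ l ∈ s, F l j := Finset.sum_comm
  have hS : 0 ≤ ∑ j ∈ s, ∑ l ∈ s, F j l := by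
    have h2 : ∑ j ∈ s, ∑ l ∈ s, (F j l + F l j)
        = (∑ j ∈ s, ∑ l ∈ s, F j l) + ∑ j ∈ s, ∑ l ∈ s, F l j := by
      simp [Finset.sum_add_distrib]
    have hnn : 0 ≤ ∑ j ∈ s, ∑ l ∈ s, (F j l + F l j) :=
      Finset.sum_nonneg fun j hj => Finset.sum_nonneg fun l hl => hpair j hj l hl
    linarith [hcomm]
  have e1 : (∑ k ∈ s, a k * q k) * (∑ k ∈ s, b k) - (∑ k ∈ s, b k * q k) * (∑ k ∈ s, a k)
      = ∑ j ∈ s, ∑ l ∈ s, F j l := by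
    rw [Finset.sum_mul_sum, Finset.sum_mul_sum, ← Finset.sum_sub_distrib]
    refine Finset.sum_congr rfl fun j hj => ?_
    rw [← Finset.sum_sub_distrib]
    refine Finset.sum_congr rfl fun l hl => ?_
    simp only [hF]; ring
  linarith

private lemma indepFun_of_const {Ω : Type*} [MeasurableSpace Ω] (μ : Measure Ω)
    [IsProbabilityMeasure μ] (W : Ω → ℕ) (c : ℝ) : IndepFun W (fun _ => c) μ := by
  rw [indepFun_iff_measure_inter_preimage_eq_mul]
  intro s t _ _
  by_cases hc : c ∈ t
  · have : (fun _ : Ω => c) ⁻¹' t = Set.univ := by ext ω; simp [hc]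
    simp [this]
  · have : (fun _ : Ω => c) ⁻¹' t = ∅ := by ext ω; simp [hc]
    simp [this]

private lemma set_decomp {Ω : Type*} (W : Ω → ℕ) (C : Ω → ℝ) {γ : ℝ} (hγ0 : 0 ≤ γ) :
    {ω | (W ω : ℝ) ≤ C ω ∧ (W ω : ℝ) ≤ γ}
      = ⋃ k ∈ Finset.range (⌊γ⌋₊ + 1), ({ω | W ω = k} ∩ {ω | (k : ℝ) ≤ C ω}) := by
  ext ω
  simp only [Set.mem_setOf_eq, Set.mem_iUnion, Set.mem_inter_iff, Finset.mem_range,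
    Nat.lt_succ_iff, exists_prop]
  constructor
  · rintro ⟨h1, h2⟩
    exact ⟨W ω, Nat.le_floor h2, rfl, h1⟩
  · rintro ⟨k, hk, hke, h⟩
    rw [hke]
    exact ⟨h, (Nat.le_floor_iff hγ0).1 hk⟩

private lemma meas_decomp {Ω : Type*} [MeasurableSpace Ω] (μ : Measure Ω)
    [IsProbabilityMeasure μ] (W : Ω → ℕ) (hW : Measurable W) (C : Ω → ℝ) (hC : Measurable C)
    (hind : IndepFun W C μ) {γ : ℝ} (hγ0 : 0 ≤ γ) :
    (μ {ω | (W ω : ℝ) ≤ C ω ∧ (W ω : ℝ) ≤ γ}).toReal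
      = ∑ k ∈ Finset.range (⌊γ⌋₊ + 1),
          (μ {ω | W ω = k}).toReal * (μ {ω | (k : ℝ) ≤ C ω}).toReal := by
  rw [set_decomp W C hγ0, measure_biUnion_finset]
  · rw [ENNReal.toReal_sum (fun k _ => measure_ne_top μ _)]
    refine Finset.sum_congr rfl fun k _ => ?_
    have : μ ({ω | W ω = k} ∩ {ω | (k : ℝ) ≤ C ω})
        = μ (W ⁻¹' {k} ∩ C ⁻¹' Set.Ici (k : ℝ)) := rfl
    rw [this, hind.measure_inter_preimage_eq_mul _ _ (measurableSet_singleton k)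
      measurableSet_Ici, ENNReal.toReal_mul]
    rfl
  · intro i _ j _ hij
    apply Set.disjoint_left.2
    rintro ω ⟨h1, _⟩ ⟨h2, _⟩
    exact hij (h1.symm.trans h2)
  · intro k _
    exact (hW (measurableSet_singleton k)).inter (hC measurableSet_Ici)

private lemma main_aux {Ω : Type*} [MeasurableSpace Ω] (μ : Measure Ω) [IsProbabilityMeasure μ]
    (n : ℕ) (p₁ p₂ : ℝ) (hp₁ : 0 ≤ p₁) (hp : p₁ ≤ p₂) (hp₂ : p₂ ≤ 1)
    (Z Z' : Ω → ℕ) (C : Ω → ℝ)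
    (hZ : Measurable Z) (hZ' : Measurable Z') (hC : Measurable C)
    (hZlaw : ∀ k : ℕ, (μ {ω | Z ω = k}).toReal =
      if k ≤ n then (n.choose k : ℝ) * p₁ ^ k * (1 - p₁) ^ (n - k) else 0)
    (hZ'law : ∀ k : ℕ, (μ {ω | Z' ω = k}).toReal =
      if k ≤ n then (n.choose k : ℝ) * p₂ ^ k * (1 - p₂) ^ (n - k) else 0)
    (hindep : IndepFun Z C μ) (hindep' : IndepFun Z' C μ)
    (γ : ℝ)
    (hγ : 0 < μ {ω | (Z ω : ℝ) ≤ γ}) (hγ' : 0 < μ {ω | (Z' ω : ℝ) ≤ γ}) :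
    (μ {ω | (Z' ω : ℝ) ≤ C ω ∧ (Z' ω : ℝ) ≤ γ}).toReal
        / (μ {ω | (Z' ω : ℝ) ≤ γ}).toReal
      ≤ (μ {ω | (Z ω : ℝ) ≤ C ω ∧ (Z ω : ℝ) ≤ γ}).toReal
          / (μ {ω | (Z ω : ℝ) ≤ γ}).toReal := by
  have hγ0 : 0 ≤ γ := by
    by_contra h
    push_neg at h
    have hempty : {ω | (Z ω : ℝ) ≤ γ} = ∅ := by
      ext ω
      simp only [Set.mem_setOf_eq, Set.mem_empty_iff_false, iff_false, not_le]
      have : (0:ℝ) ≤ (Z ω : ℝ) := Nat.cast_nonneg _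
      linarith
    rw [hempty] at hγ
    simp at hγ
  set s := Finset.range (⌊γ⌋₊ + 1) with hs
  set f₁ : ℕ → ℝ :=
    fun k => if k ≤ n then (n.choose k : ℝ) * p₁ ^ k * (1 - p₁) ^ (n - k) else 0 with hf₁
  set f₂ : ℕ → ℝ :=
    fun k => if k ≤ n then (n.choose k : ℝ) * p₂ ^ k * (1 - p₂) ^ (n - k) else 0 with hf₂
  set q : ℕ → ℝ := fun k => (μ {ω | (k : ℝ) ≤ C ω}).toReal with hq
  -- denominators
  have hdenom : ∀ (W : Ω → ℕ), Measurable W →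
      (μ {ω | (W ω : ℝ) ≤ γ}).toReal = ∑ k ∈ s, (μ {ω | W ω = k}).toReal := by
    intro W hW
    have h := meas_decomp μ W hW (fun _ => γ) measurable_const (indepFun_of_const μ W γ) hγ0
    have hset : {ω | (W ω : ℝ) ≤ (fun _ : Ω => γ) ω ∧ (W ω : ℝ) ≤ γ} = {ω | (W ω : ℝ) ≤ γ} := by
      ext ω; simp
    rw [hset] at h
    rw [h]
    refine Finset.sum_congr rfl fun k hk => ?_
    have hkγ : (k : ℝ) ≤ γ := by
      rw [hs, Finset.mem_range, Nat.lt_succ_iff] at hk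
      exact (Nat.le_floor_iff hγ0).1 hk
    have : {ω : Ω | (k : ℝ) ≤ (fun _ : Ω => γ) ω} = Set.univ := by
      ext ω; simpa using hkγ
    rw [this]
    simp
  have hD₁ : (μ {ω | (Z ω : ℝ) ≤ γ}).toReal = ∑ k ∈ s, f₁ k := by
    rw [hdenom Z hZ]; exact Finset.sum_congr rfl fun k _ => hZlaw k
  have hD₂ : (μ {ω | (Z' ω : ℝ) ≤ γ}).toReal = ∑ k ∈ s, f₂ k := by
    rw [hdenom Z' hZ']; exact Finset.sum_congr rfl fun k _ => hZ'law k
  -- numerators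
  have hN₁ : (μ {ω | (Z ω : ℝ) ≤ C ω ∧ (Z ω : ℝ) ≤ γ}).toReal = ∑ k ∈ s, f₁ k * q k := by
    rw [meas_decomp μ Z hZ C hC hindep hγ0]
    exact Finset.sum_congr rfl fun k _ => by rw [hZlaw k]
  have hN₂ : (μ {ω | (Z' ω : ℝ) ≤ C ω ∧ (Z' ω : ℝ) ≤ γ}).toReal = ∑ k ∈ s, f₂ k * q k := by
    rw [meas_decomp μ Z' hZ' C hC hindep' hγ0]
    exact Finset.sum_congr rfl fun k _ => by rw [hZ'law k]
  -- q is antitone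
  have hqanti : ∀ j ∈ s, ∀ l ∈ s, j ≤ l → q l ≤ q j := by
    intro j _ l _ hjl
    apply ENNReal.toReal_mono (measure_ne_top μ _)
    apply measure_mono
    intro ω hω
    exact le_trans (show (j:ℝ) ≤ (l:ℝ) by exact_mod_cast hjl) hω
  -- MLR property
  have hab : ∀ j ∈ s, ∀ l ∈ s, j ≤ l → f₂ j * f₁ l ≤ f₁ j * f₂ l := by
    intro j _ l _ hjl
    by_cases hl : l ≤ n
    · have hj : j ≤ n := le_trans hjl hl
      simp only [hf₁, hf₂, if_pos hl, if_pos hj]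
      have hk := pow_key hp₁ hp hp₂ j (l - j) (n - l)
      have e1 : n - l + (l - j) = n - j := by omega
      have e2 : j + (l - j) = l := by omega
      rw [e1, e2] at hk
      calc (n.choose j : ℝ) * p₂ ^ j * (1 - p₂) ^ (n - j)
            * ((n.choose l : ℝ) * p₁ ^ l * (1 - p₁) ^ (n - l))
          = ((n.choose j : ℝ) * (n.choose l : ℝ))
            * (p₂ ^ j * (1 - p₂) ^ (n - j) * (p₁ ^ l * (1 - p₁) ^ (n - l))) := by ring
        _ ≤ ((n.choose j : ℝ) * (n.choose l : ℝ))
            * (p₁ ^ j * (1 - p₁) ^ (n - j) * (p₂ ^ l * (1 - p₂) ^ (n - l))) :=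
            mul_le_mul_of_nonneg_left hk (by positivity)
        _ = (n.choose j : ℝ) * p₁ ^ j * (1 - p₁) ^ (n - j)
            * ((n.choose l : ℝ) * p₂ ^ l * (1 - p₂) ^ (n - l)) := by ring
    · simp [hf₁, hf₂, if_neg hl]
  -- positivity of denominators
  have hpos₁ : 0 < (μ {ω | (Z ω : ℝ) ≤ γ}).toReal :=
    ENNReal.toReal_pos hγ.ne' (measure_ne_top μ _)
  have hpos₂ : 0 < (μ {ω | (Z' ω : ℝ) ≤ γ}).toReal :=
    ENNReal.toReal_pos hγ'.ne' (measure_ne_top μ _)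
  rw [div_le_div_iff₀ hpos₂ hpos₁, hN₁, hN₂, hD₁, hD₂]
  exact cheby s f₁ f₂ q hab hqanti

/-- **Truncated binomial stochastic dominance.** Let `Z ∼ Binomial(n, p₁)` and
`Z' ∼ Binomial(n, p₂)` with `p₁ ≤ p₂`.  Then for all real `c` and `γ` for which the
conditioning events have positive probability,
`P(Z ≤ c | Z ≤ γ) ≥ P(Z' ≤ c | Z' ≤ γ)`, and the inequality remains true when `c` is
replaced by a random variable `C` independent of `Z` and `Z'`. -/
theorem truncated_binomial_stochastic_dominance
    {Ω : Type*} [MeasurableSpace Ω] (μ : Measure Ω) [IsProbabilityMeasure μ]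
    (n : ℕ) (p₁ p₂ : ℝ) (hp₁ : 0 ≤ p₁) (hp : p₁ ≤ p₂) (hp₂ : p₂ ≤ 1)
    (Z Z' : Ω → ℕ) (C : Ω → ℝ)
    (hZ : Measurable Z) (hZ' : Measurable Z') (hC : Measurable C)
    (hZlaw : ∀ k : ℕ, (μ {ω | Z ω = k}).toReal =
      if k ≤ n then (n.choose k : ℝ) * p₁ ^ k * (1 - p₁) ^ (n - k) else 0)
    (hZ'law : ∀ k : ℕ, (μ {ω | Z' ω = k}).toReal =
      if k ≤ n then (n.choose k : ℝ) * p₂ ^ k * (1 - p₂) ^ (n - k) else 0)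
    (hindep : IndepFun Z C μ) (hindep' : IndepFun Z' C μ)
    (γ : ℝ)
    (hγ : 0 < μ {ω | (Z ω : ℝ) ≤ γ}) (hγ' : 0 < μ {ω | (Z' ω : ℝ) ≤ γ}) :
    (∀ c : ℝ,
      (μ {ω | (Z' ω : ℝ) ≤ c ∧ (Z' ω : ℝ) ≤ γ}).toReal
          / (μ {ω | (Z' ω : ℝ) ≤ γ}).toReal
        ≤ (μ {ω | (Z ω : ℝ) ≤ c ∧ (Z ω : ℝ) ≤ γ}).toReal
            / (μ {ω | (Z ω : ℝ) ≤ γ}).toReal) ∧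
    ((μ {ω | (Z' ω : ℝ) ≤ C ω ∧ (Z' ω : ℝ) ≤ γ}).toReal
        / (μ {ω | (Z' ω : ℝ) ≤ γ}).toReal
      ≤ (μ {ω | (Z ω : ℝ) ≤ C ω ∧ (Z ω : ℝ) ≤ γ}).toReal
          / (μ {ω | (Z ω : ℝ) ≤ γ}).toReal) := by
  constructor
  · intro c
    exact main_aux μ n p₁ p₂ hp₁ hp hp₂ Z Z' (fun _ => c) hZ hZ' measurable_const
      hZlaw hZ'law (indepFun_of_const μ Z c) (indepFun_of_const μ Z' c) γ hγ hγ'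
  · exact main_aux μ n p₁ p₂ hp₁ hp hp₂ Z Z' C hZ hZ' hC hZlaw hZ'law hindep hindep' γ hγ hγ'
end

section
/- Let Z ∼ N(μ₁, 1) and Z' ∼ N(μ₂, 1) with μ₁ ≤ μ₂. Then for all real c and γ, P(Z ≤ c | Z ≤ γ) ≥ P(Z' ≤ c | Z' ≤ γ). Equivalently, writing Φ for the standard normal CDF and Φ(c; γ) := Φ(c)/Φ(γ) for c ≤ γ and Φ(c; γ) := 1 for c > γ, one has Φ(c + s; γ + s) ≥ Φ(c; γ) for all c, γ ∈ ℝ and all s ≥ 0. -/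
/-!
The standard normal CDF `Φ` is log-concave: the derivative of `φ / Φ` is
`-φ (φ + x Φ) / Φ²`, and `φ(x) + x Φ(x) = ∫_{t ≤ x} (x - t) φ(t) dt ≥ 0` because `φ' = -t φ`.
Hence for `a ≤ b` the derivative of `s ↦ Φ(a + s) / Φ(b + s)` has the sign of
`φ(a + s) / Φ(a + s) - φ(b + s) / Φ(b + s) ≥ 0`, which is the shift inequality. Shifting a
normal law by its mean turns the conditional probabilities into such ratios with `s = μ₂ - μ₁`.
-/

open MeasureTheory ProbabilityTheory

/-- The standard normal CDF `Φ`. -/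
noncomputable def stdGaussianCDF (x : ℝ) : ℝ := ((gaussianReal 0 1) (Set.Iic x)).toReal

/-- The CDF of a standard normal truncated to be no greater than `γ`:
`Φ(c; γ) = Φ(c)/Φ(γ)` for `c ≤ γ` and `Φ(c; γ) = 1` for `c > γ`. -/
noncomputable def truncGaussianCDF (c γ : ℝ) : ℝ :=
  if c ≤ γ then stdGaussianCDF c / stdGaussianCDF γ else 1

open Real Set Filter Topology

theorem monotone_div_comp_add_of_antitone_logDeriv {F : ℝ → ℝ} (hF : Differentiable ℝ F)
    (hpos : ∀ x, 0 < F x) (hlog : Antitone (logDeriv F)) {a b : ℝ} (hab : a ≤ b) :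
    Monotone fun s => F (a + s) / F (b + s) := by
  have hshift : ∀ c s : ℝ, HasDerivAt (fun s => F (c + s)) (deriv F (c + s)) s := fun c s =>
    (hF (c + s)).hasDerivAt.comp_const_add c s
  have hderiv : ∀ s, HasDerivAt (fun s => F (a + s) / F (b + s))
      ((deriv F (a + s) * F (b + s) - F (a + s) * deriv F (b + s)) / F (b + s) ^ 2) s :=
    fun s => (hshift a s).div (hshift b s) (hpos (b + s)).ne'
  refine monotone_of_deriv_nonneg (fun s => (hderiv s).differentiableAt) fun s => ?_
  rw [(hderiv s).deriv]
  have h := hlog (show a + s ≤ b + s by linarith)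
  rw [logDeriv_apply, logDeriv_apply, div_le_div_iff₀ (hpos _) (hpos _)] at h
  exact div_nonneg (by linarith) (sq_nonneg _)

theorem hasDerivAt_integral_Iic {f : ℝ → ℝ} (hf : Continuous f) (hfi : Integrable f)
    (x : ℝ) : HasDerivAt (fun y => ∫ t in Iic y, f t) (f x) x := by
  have hsplit : (fun y => ∫ t in Iic y, f t)
      = fun y => (∫ t in (0 : ℝ)..y, f t) + ∫ t in Iic 0, f t := by
    funext y
    rw [← intervalIntegral.integral_Iic_sub_Iic hfi.integrableOn hfi.integrableOn, sub_add_cancel]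
  rw [hsplit]
  exact (intervalIntegral.integral_hasDerivAt_right (hf.intervalIntegrable 0 x)
    hf.stronglyMeasurable.stronglyMeasurableAtFilter hf.continuousAt).add_const _

theorem hasDerivAt_gaussianPDFReal (μ : ℝ) (v : NNReal) (x : ℝ) :
    HasDerivAt (gaussianPDFReal μ v) (-((x - μ) / v * gaussianPDFReal μ v x)) x := by
  have hexp : HasDerivAt (fun y : ℝ => -(y - μ) ^ 2 / (2 * v)) (-((x - μ) / v)) x := by
    refine ((((hasDerivAt_id' x).sub_const μ).fun_pow 2).fun_neg.div_const
      (2 * (v : ℝ))).congr_deriv ?_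
    norm_num
    ring
  rw [gaussianPDFReal_def]
  exact (hexp.exp.const_mul (√(2 * π * v))⁻¹).congr_deriv (by ring)

theorem integrable_mul_gaussianPDFReal :
    Integrable fun t : ℝ => t * gaussianPDFReal 0 1 t := by
  convert (integrable_mul_exp_neg_mul_sq (b := 1 / 2) (by norm_num)).const_mul (√(2 * π))⁻¹
    using 2 with t
  rw [gaussianPDFReal_def]
  push_cast
  ring_nf

theorem setIntegral_Iic_mul_gaussianPDFReal (x : ℝ) :
    ∫ t in Iic x, t * gaussianPDFReal 0 1 t = -gaussianPDFReal 0 1 x := by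
  have hderiv : ∀ t, HasDerivAt (fun t => -gaussianPDFReal 0 1 t) (t * gaussianPDFReal 0 1 t) t :=
    fun t => by simpa using (hasDerivAt_gaussianPDFReal 0 1 t).fun_neg
  have hlim : Tendsto (fun t => -gaussianPDFReal 0 1 t) atBot (𝓝 0) :=
    tendsto_zero_of_hasDerivAt_of_integrableOn_Iic (a := 0) (fun t _ => hderiv t)
      integrable_mul_gaussianPDFReal.integrableOn (integrable_gaussianPDFReal 0 1).neg.integrableOn
  simpa using integral_Iic_of_hasDerivAt_of_tendsto' (fun t _ => hderiv t)
    integrable_mul_gaussianPDFReal.integrableOn hlim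

theorem stdGaussianCDF_eq_integral (x : ℝ) :
    stdGaussianCDF x = ∫ t in Iic x, gaussianPDFReal 0 1 t := by
  rw [stdGaussianCDF, gaussianReal_apply_eq_integral 0 one_ne_zero, ENNReal.toReal_ofReal
    (setIntegral_nonneg measurableSet_Iic fun t _ => gaussianPDFReal_nonneg 0 1 t)]

theorem stdGaussianCDF_pos (x : ℝ) : 0 < stdGaussianCDF x := by
  rw [stdGaussianCDF_eq_integral, setIntegral_pos_iff_support_of_nonneg_ae
    (ae_of_all _ (gaussianPDFReal_nonneg 0 1)) (integrable_gaussianPDFReal 0 1).integrableOn]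
  have hsupp : Function.support (gaussianPDFReal 0 1) = univ :=
    Function.support_eq_univ fun t => (gaussianPDFReal_pos 0 1 t one_ne_zero).ne'
  simp [hsupp]

theorem hasDerivAt_stdGaussianCDF (x : ℝ) :
    HasDerivAt stdGaussianCDF (gaussianPDFReal 0 1 x) x := by
  rw [funext stdGaussianCDF_eq_integral]
  exact hasDerivAt_integral_Iic (by rw [gaussianPDFReal_def]; fun_prop)
    (integrable_gaussianPDFReal 0 1) x

theorem gaussianPDFReal_add_mul_stdGaussianCDF_nonneg (x : ℝ) :
    0 ≤ gaussianPDFReal 0 1 x + x * stdGaussianCDF x := by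
  have h : gaussianPDFReal 0 1 x + x * stdGaussianCDF x
      = ∫ t in Iic x, (x - t) * gaussianPDFReal 0 1 t := by
    simp_rw [sub_mul]
    rw [integral_sub ((integrable_gaussianPDFReal 0 1).const_mul x).integrableOn
      integrable_mul_gaussianPDFReal.integrableOn, integral_const_mul,
      setIntegral_Iic_mul_gaussianPDFReal, stdGaussianCDF_eq_integral]
    ring
  rw [h]
  exact setIntegral_nonneg measurableSet_Iic fun t ht =>
    mul_nonneg (sub_nonneg.2 ht) (gaussianPDFReal_nonneg 0 1 t)

theorem antitone_logDeriv_stdGaussianCDF : Antitone (logDeriv stdGaussianCDF) := by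
  set φ := gaussianPDFReal 0 1
  have hlog : logDeriv stdGaussianCDF = fun x => φ x / stdGaussianCDF x := by
    ext x
    rw [logDeriv_apply, (hasDerivAt_stdGaussianCDF x).deriv]
  have hderiv : ∀ x, HasDerivAt (fun x => φ x / stdGaussianCDF x)
      (-(φ x * (φ x + x * stdGaussianCDF x)) / stdGaussianCDF x ^ 2) x := fun x =>
    ((hasDerivAt_gaussianPDFReal 0 1 x).fun_div (hasDerivAt_stdGaussianCDF x)
      (stdGaussianCDF_pos x).ne').congr_deriv (by simp only [NNReal.coe_one]; ring)
  rw [hlog]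
  refine antitone_of_deriv_nonpos (fun x => (hderiv x).differentiableAt) fun x => ?_
  rw [(hderiv x).deriv]
  exact div_nonpos_of_nonpos_of_nonneg (neg_nonpos.2 (mul_nonneg (gaussianPDFReal_nonneg 0 1 x)
    (gaussianPDFReal_add_mul_stdGaussianCDF_nonneg x))) (sq_nonneg _)

theorem stdGaussianCDF_div_le_div_add {a b s : ℝ} (hab : a ≤ b) (hs : 0 ≤ s) :
    stdGaussianCDF a / stdGaussianCDF b ≤ stdGaussianCDF (a + s) / stdGaussianCDF (b + s) := by
  simpa using monotone_div_comp_add_of_antitone_logDeriv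
    (fun x => (hasDerivAt_stdGaussianCDF x).differentiableAt) stdGaussianCDF_pos
    antitone_logDeriv_stdGaussianCDF hab hs

theorem toReal_gaussianReal_Iic (μ t : ℝ) :
    ((gaussianReal μ 1) (Iic t)).toReal = stdGaussianCDF (t - μ) := by
  rw [← zero_add μ, ← gaussianReal_map_add_const,
    Measure.map_apply (measurable_add_const μ) measurableSet_Iic, zero_add, stdGaussianCDF]
  congr 3
  ext x
  simp [le_sub_iff_add_le]

/-- **Truncated normal stochastic dominance.** If `Z ∼ N(μ₁, 1)` and `Z' ∼ N(μ₂, 1)` with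
`μ₁ ≤ μ₂`, then `P(Z ≤ c | Z ≤ γ) ≥ P(Z' ≤ c | Z' ≤ γ)` for all `c, γ`; equivalently,
`Φ(c + s; γ + s) ≥ Φ(c; γ)` for all `c, γ` and all `s ≥ 0`. -/
theorem truncated_normal_stochastic_dominance (μ₁ μ₂ : ℝ) (h : μ₁ ≤ μ₂) :
    (∀ c γ : ℝ,
      ((gaussianReal μ₂ 1) (Set.Iic (min c γ))).toReal
          / ((gaussianReal μ₂ 1) (Set.Iic γ)).toReal
        ≤ ((gaussianReal μ₁ 1) (Set.Iic (min c γ))).toReal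
            / ((gaussianReal μ₁ 1) (Set.Iic γ)).toReal) ∧
    (∀ c γ s : ℝ, 0 ≤ s → truncGaussianCDF c γ ≤ truncGaussianCDF (c + s) (γ + s)) := by
  constructor
  · intro c γ
    simp only [toReal_gaussianReal_Iic]
    convert stdGaussianCDF_div_le_div_add (sub_le_sub_right (min_le_right c γ) μ₂)
      (sub_nonneg.2 h) using 3 <;> ring
  · intro c γ s hs
    unfold truncGaussianCDF
    by_cases hcγ : c ≤ γ
    · rw [if_pos hcγ, if_pos (by linarith)]
      exact stdGaussianCDF_div_le_div_add hcγ hs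
    · rw [if_neg hcγ, if_neg (by simpa using hcγ)]
end

section
/- Let X take values in a measurable space 𝒳 and let Y be a real-valued random variable with E[Y²] < ∞ such that the conditional variance satisfies Var(Y | X) > 0 almost surely. Then for every q ∈ (0, 1], the infimum over all measurable sets R ⊆ 𝒳 with P(X ∈ R) ≥ q of the conditional variance Var(Y | X ∈ R) is strictly positive. -/
/-!
Conditional on `X`, the variance of `Y` is the least mean squared deviation from any constant,
so for an `X`-measurable region `A` and `c` the mean of `Y` on `A`,
`P(A) · Var(Y | X ∈ A) = ∫_A (Y - c)² ≥ ∫_A Var(Y | X)`. Since `Var(Y | X) > 0` a.s., it is at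
least some `δ > 0` outside a set of probability `< q / 2`, so the right-hand side is at least
`δ q / 2` whenever `P(A) ≥ q`.
-/

open MeasureTheory ProbabilityTheory Filter
open scoped ENNReal Topology

namespace MeasureTheory

variable {Ω : Type*} [MeasurableSpace Ω] {μ : Measure Ω}

lemma setIntegral_eq_measureReal_mul_integral_cond {s : Set Ω} (hs : μ s ≠ ∞) (f : Ω → ℝ) :
    ∫ ω in s, f ω ∂μ = μ.real s * ∫ ω, f ω ∂μ[|s] := by
  rcases eq_or_ne (μ s) 0 with hs₀ | hs₀
  · simp [Measure.restrict_eq_zero.2 hs₀, measureReal_def, hs₀]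
  · rw [ProbabilityTheory.cond, integral_smul_measure, ENNReal.toReal_inv, smul_eq_mul,
      ← measureReal_def,
      mul_inv_cancel_left₀ (by simp [measureReal_def, ENNReal.toReal_ne_zero, hs₀, hs])]

lemma exists_pos_le_setIntegral_of_ae_pos [IsFiniteMeasure μ] {f : Ω → ℝ} (hf : Integrable f μ)
    (hpos : ∀ᵐ ω ∂μ, 0 < f ω) {q : ℝ} (hq : 0 < q) :
    ∃ ε > 0, ∀ s, MeasurableSet s → ENNReal.ofReal q ≤ μ s → ε ≤ ∫ ω in s, f ω ∂μ := by
  have hsmall : Tendsto (fun r ↦ μ {ω | f ω < r}) (𝓝[>] 0) (𝓝 0) := by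
    have hinter : (⋂ r > (0 : ℝ), {ω | f ω < r}) = {ω | ¬ 0 < f ω} := by
      ext ω; simp [forall_gt_iff_le]
    have := tendsto_measure_biInter_gt (μ := μ) (s := fun r ↦ {ω | f ω < r}) (a := (0 : ℝ))
      (fun r _ ↦ nullMeasurableSet_lt hf.aemeasurable aemeasurable_const)
      (fun i j _ hij ω hω ↦ lt_of_lt_of_le hω hij) ⟨1, one_pos, measure_ne_top μ _⟩
    rwa [hinter, ae_iff.1 hpos] at this
  obtain ⟨δ, hδsmall, hδ⟩ :=
    ((hsmall.eventually (gt_mem_nhds (ENNReal.ofReal_pos.2 (half_pos hq)))).and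
      self_mem_nhdsWithin).exists
  refine ⟨δ * (q / 2), by positivity, fun s hs hqs ↦ ?_⟩
  have hmass : q / 2 ≤ μ.real ({ω | δ ≤ f ω} ∩ s) := by
    have hcover : s ⊆ ({ω | δ ≤ f ω} ∩ s) ∪ {ω | f ω < δ} := fun ω hω ↦
      (le_or_gt δ (f ω)).imp (fun h ↦ ⟨h, hω⟩) id
    have hq_le : q ≤ μ.real s := (ENNReal.ofReal_le_iff_le_toReal (measure_ne_top μ s)).1 hqs
    have hbad : μ.real {ω | f ω < δ} < q / 2 := ENNReal.toReal_lt_of_lt_ofReal hδsmall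
    linarith [(measureReal_mono hcover).trans (measureReal_union_le _ _)]
  calc δ * (q / 2) ≤ δ * μ.real ({ω | δ ≤ f ω} ∩ s) := by gcongr
    _ = δ * (μ.restrict s).real {ω | δ ≤ f ω} := by rw [measureReal_restrict_apply' hs]
    _ ≤ ∫ ω in s, f ω ∂μ :=
      mul_meas_ge_le_integral_of_nonneg (ae_restrict_of_ae (hpos.mono fun _ h ↦ h.le))
        hf.integrableOn δ

end MeasureTheory

namespace ProbabilityTheory

variable {Ω : Type*} {m m₀ : MeasurableSpace Ω} {μ : Measure[m₀] Ω} {X : Ω → ℝ}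

lemma condVar_sub_const_ae_eq (hm : m ≤ m₀) [IsFiniteMeasure μ] (hX : Integrable X μ) (c : ℝ) :
    Var[fun ω ↦ X ω - c; μ | m] =ᵐ[μ] Var[X; μ | m] := by
  have hcond : μ[fun ω ↦ X ω - c | m] =ᵐ[μ] μ[X | m] - fun _ ↦ c :=
    (condExp_sub hX (integrable_const c) m).trans (by rw [condExp_const hm c])
  refine condExp_congr_ae ?_
  filter_upwards [hcond] with ω hω
  simp [hω]

lemma condVar_ae_le_condExp_sub_const_sq (hm : m ≤ m₀) [IsFiniteMeasure μ] (hX : MemLp X 2 μ)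
    (c : ℝ) : Var[X; μ | m] ≤ᵐ[μ] μ[fun ω ↦ (X ω - c) ^ 2 | m] := by
  filter_upwards [condVar_sub_const_ae_eq hm (hX.integrable one_le_two) c,
    condVar_ae_le_condExp_sq hm (hX.sub (memLp_const c))] with ω hsub hle
  exact hsub ▸ hle

lemma setIntegral_condVar_le_measureReal_mul_variance_cond (hm : m ≤ m₀) [IsFiniteMeasure μ]
    (hX : MemLp X 2 μ) {s : Set Ω} (hs : MeasurableSet[m] s) :
    ∫ ω in s, Var[X; μ | m] ω ∂μ ≤ μ.real s * variance X μ[|s] := by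
  set c := ∫ ω, X ω ∂μ[|s]
  calc ∫ ω in s, Var[X; μ | m] ω ∂μ
      ≤ ∫ ω in s, μ[fun ω ↦ (X ω - c) ^ 2 | m] ω ∂μ :=
        setIntegral_mono_ae integrable_condVar.integrableOn integrable_condExp.integrableOn
          (condVar_ae_le_condExp_sub_const_sq hm hX c)
    _ = ∫ ω in s, (X ω - c) ^ 2 ∂μ :=
        setIntegral_condExp hm (hX.sub (memLp_const c)).integrable_sq hs
    _ = μ.real s * variance X μ[|s] := by
        rw [setIntegral_eq_measureReal_mul_integral_cond (measure_ne_top μ s),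
          variance_eq_integral (hX.aestronglyMeasurable.aemeasurable.mono_ac
            cond_absolutelyContinuous)]

end ProbabilityTheory

theorem positive_region_conditional_variance_general
    {Ω 𝒳 : Type*} [m0 : MeasurableSpace Ω] [MeasurableSpace 𝒳]
    (μ : Measure Ω) [IsProbabilityMeasure μ]
    (X : Ω → 𝒳) (hX : Measurable X)
    (Y : Ω → ℝ) (hY2 : MemLp Y 2 μ)
    (hvar : ∀ᵐ ω ∂μ,
      0 < (μ[fun ω' => (Y ω' - (μ[Y | MeasurableSpace.comap X inferInstance]) ω') ^ 2 |
            MeasurableSpace.comap X inferInstance]) ω) :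
    ∀ q : ℝ, 0 < q → q ≤ 1 →
      ∃ ε > (0 : ℝ), ∀ R : Set 𝒳, MeasurableSet R → ENNReal.ofReal q ≤ μ (X ⁻¹' R) →
        ε ≤ variance Y (μ[|X ⁻¹' R]) := by
  intro q hq _
  obtain ⟨ε, hε, hbound⟩ := exists_pos_le_setIntegral_of_ae_pos
    (integrable_condVar (m := MeasurableSpace.comap X inferInstance)) hvar hq
  refine ⟨ε, hε, fun R hR hqR ↦ ?_⟩
  have hpreimage : MeasurableSet[MeasurableSpace.comap X inferInstance] (X ⁻¹' R) := ⟨R, hR, rfl⟩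
  calc ε ≤ ∫ ω in X ⁻¹' R, Var[Y; μ | MeasurableSpace.comap X inferInstance] ω ∂μ :=
        hbound _ (hX hR) hqR
    _ ≤ μ.real (X ⁻¹' R) * variance Y μ[|X ⁻¹' R] :=
        setIntegral_condVar_le_measureReal_mul_variance_cond hX.comap_le hY2 hpreimage
    _ ≤ variance Y μ[|X ⁻¹' R] :=
        mul_le_of_le_one_left (variance_nonneg _ _) measureReal_le_one

/-- **Positive region conditional variance.** If `E[Y²] < ∞` and `Var(Y | X) > 0` almost
surely, then for every `q ∈ (0, 1]` the infimum of `Var(Y | X ∈ R)` over measurable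
regions `R` with `P(X ∈ R) ≥ q` is strictly positive. -/
theorem positive_region_conditional_variance
    {Ω 𝒳 : Type*} [m0 : MeasurableSpace Ω] [MeasurableSpace 𝒳]
    (μ : Measure Ω) [IsProbabilityMeasure μ]
    (X : Ω → 𝒳) (hX : Measurable X)
    (Y : Ω → ℝ) (hY : Measurable Y) (hY2 : MemLp Y 2 μ)
    (hvar : ∀ᵐ ω ∂μ,
      0 < (μ[fun ω' => (Y ω' - (μ[Y | MeasurableSpace.comap X inferInstance]) ω') ^ 2 |
            MeasurableSpace.comap X inferInstance]) ω) :
    ∀ q : ℝ, 0 < q → q ≤ 1 →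
      ∃ ε > (0 : ℝ), ∀ R : Set 𝒳, MeasurableSet R → ENNReal.ofReal q ≤ μ (X ⁻¹' R) →
        ε ≤ variance Y (μ[|X ⁻¹' R]) :=
  positive_region_conditional_variance_general (m0 := m0) μ X hX Y hY2 hvar
end

section
/- Let X be an integrable real-valued random variable, A an event, and F a σ-algebra on a common probability space. Then (i) E[1_A | F] > 0 almost surely on A, so that the ratio E[X·1_A | F] / E[1_A | F] is well-defined almost surely on A; and (ii) this ratio agrees with E[X | σ(F, 1_A)] almost surely on A, i.e., E[X·1_A | F] / E[1_A | F] = E[X | σ(F, 1_A)] almost everywhere on the event A. -/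
open MeasureTheory

/-- Any set measurable w.r.t. `F ⊔ generateFrom {A}` agrees with an `F`-measurable set on `A`. -/
lemma aux_sup_event_inter {Ω : Type*} (F : MeasurableSpace Ω) (A : Set Ω) {s : Set Ω}
    (hs : MeasurableSet[F ⊔ MeasurableSpace.generateFrom {A}] s) :
    ∃ t, MeasurableSet[F] t ∧ s ∩ A = t ∩ A := by
  let m' : MeasurableSpace Ω :=
    { MeasurableSet' := fun s => ∃ t, MeasurableSet[F] t ∧ s ∩ A = t ∩ A
      measurableSet_empty := ⟨∅, MeasurableSet.empty, rfl⟩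
      measurableSet_compl := by
        rintro u ⟨t, ht, hut⟩
        refine ⟨tᶜ, ht.compl, ?_⟩
        ext ω
        constructor
        · rintro ⟨hωu, hωA⟩
          refine ⟨fun hωt => hωu ?_, hωA⟩
          have : ω ∈ t ∩ A := ⟨hωt, hωA⟩
          rw [← hut] at this
          exact this.1
        · rintro ⟨hωt, hωA⟩
          refine ⟨fun hωu => hωt ?_, hωA⟩
          have : ω ∈ u ∩ A := ⟨hωu, hωA⟩
          rw [hut] at this
          exact this.1
      measurableSet_iUnion := by
        intro f hf
        choose t ht hft using hf
        refine ⟨⋃ i, t i, MeasurableSet.iUnion ht, ?_⟩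
        rw [Set.iUnion_inter, Set.iUnion_inter]
        exact Set.iUnion_congr hft }
  have hle : F ⊔ MeasurableSpace.generateFrom {A} ≤ m' := by
    refine sup_le (fun u hu => ⟨u, hu, rfl⟩) (MeasurableSpace.generateFrom_le ?_)
    rintro u hu
    rw [Set.mem_singleton_iff] at hu
    subst hu
    exact ⟨Set.univ, MeasurableSet.univ, by simp⟩
  exact hle _ hs

/-- Main result, with the binders ordered so that `m0` is the preferred local instance. -/
theorem aux_condexp_ratio_main
    {Ω : Type*} (F : MeasurableSpace Ω) [m0 : MeasurableSpace Ω] (μ : Measure Ω)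
    [IsProbabilityMeasure μ]
    (hF : F ≤ m0)
    (A : Set Ω) (hA : MeasurableSet[m0] A)
    (X : Ω → ℝ) (hX : Integrable X μ) :
    (∀ᵐ ω ∂μ, ω ∈ A → 0 < (μ[A.indicator (fun _ => (1 : ℝ)) | F]) ω) ∧
    (∀ᵐ ω ∂μ, ω ∈ A →
      (μ[A.indicator X | F]) ω / (μ[A.indicator (fun _ => (1 : ℝ)) | F]) ω
        = (μ[X | F ⊔ MeasurableSpace.generateFrom {A}]) ω) := by
  have hA0 : MeasurableSet[m0] A := hA
  have hG : F ⊔ MeasurableSpace.generateFrom {A} ≤ m0 := by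
    refine sup_le hF (MeasurableSpace.generateFrom_le ?_)
    rintro t ht
    rw [Set.mem_singleton_iff] at ht
    subst ht
    exact hA0
  have hAG : MeasurableSet[F ⊔ MeasurableSpace.generateFrom {A}] A :=
    le_sup_right (α := MeasurableSpace Ω) _
      (MeasurableSpace.measurableSet_generateFrom (Set.mem_singleton A))
  haveI : SigmaFinite (μ.trim hF) := by
    have : IsFiniteMeasure (μ.trim hF) :=
      ⟨by rw [trim_measurableSet_eq hF MeasurableSet.univ]; exact measure_lt_top _ _⟩
    infer_instance
  haveI : SigmaFinite (μ.trim hG) := by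
    have : IsFiniteMeasure (μ.trim hG) :=
      ⟨by rw [trim_measurableSet_eq hG MeasurableSet.univ]; exact measure_lt_top _ _⟩
    infer_instance
  set h : Ω → ℝ := μ[A.indicator (fun _ => (1 : ℝ)) | F] with hhdef
  set N : Ω → ℝ := μ[A.indicator X | F] with hNdef
  set Y : Ω → ℝ := μ[X | F ⊔ MeasurableSpace.generateFrom {A}] with hYdef
  set R : Ω → ℝ := fun ω => N ω / h ω with hRdef
  have h1A_int : Integrable (A.indicator (fun _ => (1 : ℝ))) μ :=
    (integrable_const (μ := μ) (1 : ℝ)).indicator hA0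
  have hXA_int : Integrable (A.indicator X) μ := hX.indicator hA0
  have hh_sm : StronglyMeasurable[F] h := stronglyMeasurable_condExp
  have hN_sm : StronglyMeasurable[F] N := stronglyMeasurable_condExp
  have hY_sm : StronglyMeasurable[F ⊔ MeasurableSpace.generateFrom {A}] Y := stronglyMeasurable_condExp
  have hR_m : Measurable[F] R := hN_sm.measurable.div hh_sm.measurable
  -- the set where h ≤ 0
  have hB : MeasurableSet[F] {ω | h ω ≤ 0} :=
    measurableSet_le hh_sm.measurable measurable_const
  -- μ (A ∩ {h ≤ 0}) = 0
  have hnull : μ (A ∩ {ω | h ω ≤ 0}) = 0 := by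
    have e1 : ∫ ω in {ω | h ω ≤ 0}, h ω ∂μ
        = ∫ ω in {ω | h ω ≤ 0}, A.indicator (fun _ => (1 : ℝ)) ω ∂μ :=
      setIntegral_condExp hF h1A_int hB
    have e2 : ∫ ω in {ω | h ω ≤ 0}, A.indicator (fun _ => (1 : ℝ)) ω ∂μ
        = (μ ({ω | h ω ≤ 0} ∩ A)).toReal := by
      rw [setIntegral_indicator (μ := μ) hA0, setIntegral_const (μ := μ), smul_eq_mul, mul_one, measureReal_def]
    have e3 : ∫ ω in {ω | h ω ≤ 0}, h ω ∂μ ≤ 0 :=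
      integral_nonpos_of_ae
        ((ae_restrict_iff' (hF _ hB)).2 (Filter.Eventually.of_forall fun ω hω => hω))
    have e4 : (μ ({ω | h ω ≤ 0} ∩ A)).toReal = 0 :=
      le_antisymm (by rw [← e2, ← e1]; exact e3) ENNReal.toReal_nonneg
    rw [Set.inter_comm]
    exact (ENNReal.toReal_eq_zero_iff _).1 e4 |>.resolve_right (measure_ne_top μ _)
  -- Part (i)
  have part1 : ∀ᵐ ω ∂μ, ω ∈ A → 0 < h ω := by
    rw [MeasureTheory.ae_iff]
    refine measure_mono_null ?_ hnull
    intro ω hω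
    simp only [Set.mem_setOf_eq] at hω
    push_neg at hω
    exact ⟨hω.1, hω.2⟩
  -- integral identities over F-measurable sets
  have int_eq : ∀ t : Set Ω, MeasurableSet[F] t →
      ∫ ω in t ∩ A, X ω ∂μ = ∫ ω in t, N ω ∂μ := by
    intro t ht
    rw [hNdef, setIntegral_condExp hF hXA_int ht, setIntegral_indicator (μ := μ) hA0]
  have h_int_eq : ∀ t : Set Ω, MeasurableSet[F] t →
      ∫ ω in t, h ω ∂μ = (μ (t ∩ A)).toReal := by
    intro t ht
    rw [hhdef, setIntegral_condExp hF h1A_int ht, setIntegral_indicator (μ := μ) hA0,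
      setIntegral_const (μ := μ), smul_eq_mul, mul_one, measureReal_def]
  -- key estimate, case 1 : on a F-set where R ≤ q, h > 0, and Y ≥ r on its trace on A
  have key : ∀ q r : ℝ, q < r → ∀ t : Set Ω, MeasurableSet[F] t →
      (∀ ω ∈ t, R ω ≤ q ∧ 0 < h ω) → (∀ ω ∈ t ∩ A, r ≤ Y ω) → μ (t ∩ A) = 0 := by
    intro q r hqr t ht hpt hYt
    have htm0 : MeasurableSet[m0] t := hF _ ht
    have htA : MeasurableSet[F ⊔ MeasurableSpace.generateFrom {A}] (t ∩ A) := (le_sup_left (α := MeasurableSpace Ω) _ ht).inter hAG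
    have htAm0 : MeasurableSet[m0] (t ∩ A) := hG _ htA
    set m : ℝ := (μ (t ∩ A)).toReal with hm
    -- upper bound
    have up : ∫ ω in t ∩ A, X ω ∂μ ≤ q * m := by
      rw [int_eq t ht]
      have mono : ∫ ω in t, N ω ∂μ ≤ ∫ ω in t, q * h ω ∂μ := by
        refine setIntegral_mono_on (μ := μ) integrable_condExp.integrableOn
          (integrable_condExp.const_mul q).integrableOn htm0 ?_
        intro ω hω
        have h1 : N ω = R ω * h ω := (div_mul_cancel₀ _ (ne_of_gt (hpt ω hω).2)).symm
        rw [h1]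
        exact mul_le_mul_of_nonneg_right (hpt ω hω).1 (le_of_lt (hpt ω hω).2)
      calc ∫ ω in t, N ω ∂μ ≤ ∫ ω in t, q * h ω ∂μ := mono
        _ = q * ∫ ω in t, h ω ∂μ := integral_const_mul (μ := μ.restrict t) q _
        _ = q * m := by rw [h_int_eq t ht]
    -- lower bound
    have low : r * m ≤ ∫ ω in t ∩ A, X ω ∂μ := by
      rw [← setIntegral_condExp hG hX htA]
      have : ∫ ω in t ∩ A, (r : ℝ) ∂μ ≤ ∫ ω in t ∩ A, Y ω ∂μ :=
        setIntegral_mono_on (μ := μ) (integrableOn_const (μ := μ) (C := r) (measure_ne_top _ _))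
          integrable_condExp.integrableOn htAm0 hYt
      rwa [setIntegral_const (μ := μ), smul_eq_mul, mul_comm, measureReal_def] at this
    have hm0 : m = 0 := by
      have h0 : 0 ≤ m := ENNReal.toReal_nonneg
      nlinarith
    exact (ENNReal.toReal_eq_zero_iff _).1 hm0 |>.resolve_right (measure_ne_top μ _)
  -- key estimate, case 2 : Y ≤ q on trace, R ≥ r
  have key' : ∀ q r : ℝ, q < r → ∀ t : Set Ω, MeasurableSet[F] t →
      (∀ ω ∈ t, r ≤ R ω ∧ 0 < h ω) → (∀ ω ∈ t ∩ A, Y ω ≤ q) → μ (t ∩ A) = 0 := by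
    intro q r hqr t ht hpt hYt
    have htm0 : MeasurableSet[m0] t := hF _ ht
    have htA : MeasurableSet[F ⊔ MeasurableSpace.generateFrom {A}] (t ∩ A) := (le_sup_left (α := MeasurableSpace Ω) _ ht).inter hAG
    have htAm0 : MeasurableSet[m0] (t ∩ A) := hG _ htA
    set m : ℝ := (μ (t ∩ A)).toReal with hm
    have low : r * m ≤ ∫ ω in t ∩ A, X ω ∂μ := by
      rw [int_eq t ht]
      have mono : ∫ ω in t, r * h ω ∂μ ≤ ∫ ω in t, N ω ∂μ := by
        refine setIntegral_mono_on (μ := μ) (integrable_condExp.const_mul r).integrableOn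
          integrable_condExp.integrableOn htm0 ?_
        intro ω hω
        have h1 : N ω = R ω * h ω := (div_mul_cancel₀ _ (ne_of_gt (hpt ω hω).2)).symm
        rw [h1]
        exact mul_le_mul_of_nonneg_right (hpt ω hω).1 (le_of_lt (hpt ω hω).2)
      calc r * m = r * ∫ ω in t, h ω ∂μ := by rw [h_int_eq t ht]
        _ = ∫ ω in t, r * h ω ∂μ := (integral_const_mul (μ := μ.restrict t) r _).symm
        _ ≤ ∫ ω in t, N ω ∂μ := mono
    have up : ∫ ω in t ∩ A, X ω ∂μ ≤ q * m := by
      rw [← setIntegral_condExp hG hX htA]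
      have : ∫ ω in t ∩ A, Y ω ∂μ ≤ ∫ ω in t ∩ A, (q : ℝ) ∂μ :=
        setIntegral_mono_on (μ := μ) integrable_condExp.integrableOn
          (integrableOn_const (μ := μ) (C := q) (measure_ne_top _ _)) htAm0 hYt
      rwa [setIntegral_const (μ := μ), smul_eq_mul, mul_comm, measureReal_def] at this
    have hm0 : m = 0 := by
      have h0 : 0 ≤ m := ENNReal.toReal_nonneg
      nlinarith
    exact (ENNReal.toReal_eq_zero_iff _).1 hm0 |>.resolve_right (measure_ne_top μ _)
  -- null sets indexed by rational pairs
  have hcase1 : ∀ q r : ℚ, (q : ℝ) < r →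
      μ (A ∩ {ω | R ω ≤ q} ∩ {ω | (r : ℝ) ≤ Y ω}) = 0 := by
    intro q r hqr
    have hYset : MeasurableSet[F ⊔ MeasurableSpace.generateFrom {A}] {ω | (r : ℝ) ≤ Y ω} :=
      measurableSet_le measurable_const hY_sm.measurable
    obtain ⟨sY, hsY, hsYA⟩ := aux_sup_event_inter F A hYset
    set t : Set Ω := sY ∩ {ω | R ω ≤ q} ∩ {ω | 0 < h ω} with htdef
    have ht : MeasurableSet[F] t :=
      (hsY.inter (measurableSet_le hR_m measurable_const)).inter
        (measurableSet_lt measurable_const hh_sm.measurable)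
    have hnullt : μ (t ∩ A) = 0 := by
      refine key q r hqr t ht (fun ω hω => ⟨hω.1.2, hω.2⟩) ?_
      rintro ω ⟨⟨⟨hω1, _⟩, _⟩, hωA⟩
      have : ω ∈ {ω | (r : ℝ) ≤ Y ω} ∩ A := by rw [hsYA]; exact ⟨hω1, hωA⟩
      exact this.1
    refine measure_mono_null ?_ (measure_union_null hnullt hnull)
    rintro ω ⟨⟨hωA, hωR⟩, hωY⟩
    by_cases hh0 : 0 < h ω
    · left
      have hωs : ω ∈ sY ∩ A := by rw [← hsYA]; exact ⟨hωY, hωA⟩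
      exact ⟨⟨⟨hωs.1, hωR⟩, hh0⟩, hωA⟩
    · right
      exact ⟨hωA, not_lt.mp hh0⟩
  have hcase2 : ∀ q r : ℚ, (q : ℝ) < r →
      μ (A ∩ {ω | Y ω ≤ q} ∩ {ω | (r : ℝ) ≤ R ω}) = 0 := by
    intro q r hqr
    have hYset : MeasurableSet[F ⊔ MeasurableSpace.generateFrom {A}] {ω | Y ω ≤ q} :=
      measurableSet_le hY_sm.measurable measurable_const
    obtain ⟨sY, hsY, hsYA⟩ := aux_sup_event_inter F A hYset
    set t : Set Ω := sY ∩ {ω | (r : ℝ) ≤ R ω} ∩ {ω | 0 < h ω} with htdef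
    have ht : MeasurableSet[F] t :=
      (hsY.inter (measurableSet_le measurable_const hR_m)).inter
        (measurableSet_lt measurable_const hh_sm.measurable)
    have hnullt : μ (t ∩ A) = 0 := by
      refine key' q r hqr t ht (fun ω hω => ⟨hω.1.2, hω.2⟩) ?_
      rintro ω ⟨⟨⟨hω1, _⟩, _⟩, hωA⟩
      have : ω ∈ {ω | Y ω ≤ q} ∩ A := by rw [hsYA]; exact ⟨hω1, hωA⟩
      exact this.1
    refine measure_mono_null ?_ (measure_union_null hnullt hnull)
    rintro ω ⟨⟨hωA, hωY⟩, hωR⟩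
    by_cases hh0 : 0 < h ω
    · left
      have hωs : ω ∈ sY ∩ A := by rw [← hsYA]; exact ⟨hωY, hωA⟩
      exact ⟨⟨⟨hωs.1, hωR⟩, hh0⟩, hωA⟩
    · right
      exact ⟨hωA, not_lt.mp hh0⟩
  -- the set where R ≠ Y on A is null
  have hS : μ {ω | ω ∈ A ∧ R ω ≠ Y ω} = 0 := by
    set E : ℚ → ℚ → Set Ω := fun q r =>
      (A ∩ {ω | R ω ≤ q} ∩ {ω | (r : ℝ) ≤ Y ω}
        ∪ A ∩ {ω | Y ω ≤ q} ∩ {ω | (r : ℝ) ≤ R ω}) ∩ {_ω | (q : ℝ) < r} with hEdef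
    have hEnull : ∀ q r : ℚ, μ (E q r) = 0 := by
      intro q r
      by_cases hqr : (q : ℝ) < r
      · refine measure_mono_null Set.inter_subset_left ?_
        exact measure_union_null (hcase1 q r hqr) (hcase2 q r hqr)
      · refine measure_mono_null ?_ (measure_empty (μ := μ))
        rintro ω ⟨_, hω⟩
        exact absurd hω hqr
    refine measure_mono_null ?_
      (measure_iUnion_null fun q => measure_iUnion_null fun r => hEnull q r)
    rintro ω ⟨hωA, hωne⟩
    rcases lt_or_gt_of_ne hωne with hlt | hlt
    · obtain ⟨q, hq1, hq2⟩ := exists_rat_btwn hlt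
      obtain ⟨r, hr1, hr2⟩ := exists_rat_btwn hq2
      refine Set.mem_iUnion.2 ⟨q, Set.mem_iUnion.2 ⟨r, ?_⟩⟩
      exact ⟨Or.inl ⟨⟨hωA, le_of_lt hq1⟩, le_of_lt hr2⟩, by exact_mod_cast hr1⟩
    · obtain ⟨q, hq1, hq2⟩ := exists_rat_btwn hlt
      obtain ⟨r, hr1, hr2⟩ := exists_rat_btwn hq2
      refine Set.mem_iUnion.2 ⟨q, Set.mem_iUnion.2 ⟨r, ?_⟩⟩
      exact ⟨Or.inr ⟨⟨hωA, le_of_lt hq1⟩, le_of_lt hr2⟩, by exact_mod_cast hr1⟩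
  have part2 : ∀ᵐ ω ∂μ, ω ∈ A → R ω = Y ω := by
    rw [MeasureTheory.ae_iff]
    refine measure_mono_null ?_ hS
    intro ω hω
    simp only [Set.mem_setOf_eq] at hω ⊢
    push_neg at hω
    exact hω
  exact ⟨part1, part2⟩

/-- **Measure-theoretic conditional expectation given a σ-algebra and an event.** For an
integrable `X`, an event `A` and a σ-algebra `F`: (i) `E[1_A | F] > 0` a.s. on `A`, so the
ratio `E[X·1_A | F] / E[1_A | F]` is well-defined a.s. on `A`; and (ii) this ratio equals
`E[X | σ(F, 1_A)]` almost everywhere on `A`. -/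
theorem condexp_ratio_eq_condexp_sigma_event
    {Ω : Type*} (F : MeasurableSpace Ω) [m0 : MeasurableSpace Ω] (μ : Measure Ω) [IsProbabilityMeasure μ]
    (hF : F ≤ m0)
    (A : Set Ω) (hA : MeasurableSet A)
    (X : Ω → ℝ) (hX : Integrable X μ) :
    (∀ᵐ ω ∂μ, ω ∈ A → 0 < (μ[A.indicator (fun _ => (1 : ℝ)) | F]) ω) ∧
    (∀ᵐ ω ∂μ, ω ∈ A →
      (μ[A.indicator X | F]) ω / (μ[A.indicator (fun _ => (1 : ℝ)) | F]) ω
        = (μ[X | F ⊔ MeasurableSpace.generateFrom {A}]) ω) :=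
  @aux_condexp_ratio_main Ω F m0 μ ‹_› hF A hA X hX
end

section
/- Let f : ℝ → ℝ be strictly increasing, and let X_n and Y_n be sequences of real random variables with X_n ↔_f Y_n (f-convergence). Let 𝓑 be a collection of open intervals of ℝ such that for every(a,b) ∈ 𝓑 there exists (a',b') ∈ 𝓑 with a' < a and b' > b (with the conventions that −∞ < −∞ and ∞ > ∞, so infinite endpoints need not be strictly enlarged). Then X_n is 𝓑-bounded in probability if and only if Y_n is 𝓑-bounded in probability. -/
open MeasureTheory Filter Topology

/-- `X` f-converges to `Y`: `d_f(X_n, Y_n) = |f (X_n) - f (Y_n)| → 0` in probability. -/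
def FConvergesTo (f : ℝ → ℝ) {Ω : Type*} [MeasurableSpace Ω] (μ : Measure Ω)
    (X Y : ℕ → Ω → ℝ) : Prop :=
  ∀ δ : ℝ, 0 < δ →
    Tendsto (fun n => μ {ω | δ < |f (X n ω) - f (Y n ω)|}) atTop (𝓝 0)

/-- Membership in the open interval with extended-real endpoints `p = (a, b)`. -/
def MemEInterval (p : EReal × EReal) (x : ℝ) : Prop :=
  p.1 < (x : EReal) ∧ (x : EReal) < p.2

/-- The enlargement property of a collection of open intervals: every interval `(a,b)` in
the collection admits `(a',b')` in the collection with `a' < a` and `b' > b`, with the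
conventions `−∞ < −∞` and `∞ > ∞`. -/
def EnlargementProperty (B : Set (EReal × EReal)) : Prop :=
  ∀ p ∈ B, ∃ q ∈ B,
    (q.1 < p.1 ∨ (p.1 = ⊥ ∧ q.1 = ⊥)) ∧ (p.2 < q.2 ∨ (p.2 = ⊤ ∧ q.2 = ⊤))

/-- `X` is `𝓑`-bounded in probability: for every `ε > 0` there are `N` and an interval
`I ∈ 𝓑` with `P(X_n ∉ I) < ε` for all `n > N`. -/
def BBoundedInProbability (B : Set (EReal × EReal)) {Ω : Type*} [MeasurableSpace Ω]
    (μ : Measure Ω) (X : ℕ → Ω → ℝ) : Prop :=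
  ∀ ε : ℝ, 0 < ε → ∃ N : ℕ, ∃ p ∈ B, ∀ n > N,
    μ {ω | ¬ MemEInterval p (X n ω)} < ENNReal.ofReal ε

lemma lower_aux (f : ℝ → ℝ) (hf : StrictMono f) (a a' : EReal)
    (h : a' < a ∨ (a = ⊥ ∧ a' = ⊥)) :
    ∃ δ > 0, ∀ x y : ℝ, a < (x : EReal) → |f x - f y| ≤ δ → a' < (y : EReal) := by
  rcases h with h | ⟨_, ha'⟩
  · induction a' using EReal.rec with
    | bot => exact ⟨1, one_pos, fun x y _ _ => EReal.bot_lt_coe y⟩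
    | top => exact absurd h (not_top_lt)
    | coe r' =>
      induction a using EReal.rec with
      | bot => exact absurd h (not_lt_bot)
      | top => exact ⟨1, one_pos, fun x y hx _ => absurd hx (not_top_lt)⟩
      | coe r =>
        have hr : r' < r := by exact_mod_cast h
        refine ⟨f r - f r', sub_pos.mpr (hf hr), fun x y hx hd => ?_⟩
        have hrx : r < x := by exact_mod_cast hx
        have h1 : f x - f y ≤ f r - f r' := le_trans (le_abs_self _) hd
        have : f r' < f y := by
          have := hf hrx
          linarith
        exact_mod_cast hf.lt_iff_lt.mp this
  · exact ⟨1, one_pos, fun x y _ _ => ha' ▸ EReal.bot_lt_coe y⟩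

lemma upper_aux (f : ℝ → ℝ) (hf : StrictMono f) (b b' : EReal)
    (h : b < b' ∨ (b = ⊤ ∧ b' = ⊤)) :
    ∃ δ > 0, ∀ x y : ℝ, (x : EReal) < b → |f x - f y| ≤ δ → (y : EReal) < b' := by
  rcases h with h | ⟨_, hb'⟩
  · induction b' using EReal.rec with
    | bot => exact absurd h (not_lt_bot)
    | top => exact ⟨1, one_pos, fun x y _ _ => EReal.coe_lt_top y⟩
    | coe r' =>
      induction b using EReal.rec with
      | bot => exact ⟨1, one_pos, fun x y hx _ => absurd hx (not_lt_bot)⟩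
      | top => exact absurd h (not_top_lt)
      | coe r =>
        have hr : r < r' := by exact_mod_cast h
        refine ⟨f r' - f r, sub_pos.mpr (hf hr), fun x y hx hd => ?_⟩
        have hrx : x < r := by exact_mod_cast hx
        have h2 := (abs_le.mp hd).1
        have h3 := hf hrx
        have : f y < f r' := by linarith
        exact_mod_cast hf.lt_iff_lt.mp this
  · exact ⟨1, one_pos, fun x y _ _ => hb' ▸ EReal.coe_lt_top y⟩

lemma transfer_one_dir (f : ℝ → ℝ) (hf : StrictMono f)
    {Ω : Type*} [MeasurableSpace Ω] (μ : Measure Ω) [IsProbabilityMeasure μ]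
    (X Y : ℕ → Ω → ℝ) (hXY : FConvergesTo f μ X Y)
    (B : Set (EReal × EReal)) (hB : EnlargementProperty B)
    (hX : BBoundedInProbability B μ X) : BBoundedInProbability B μ Y := by
  intro ε hε
  obtain ⟨N₁, p, hp, hN₁⟩ := hX (ε / 2) (half_pos hε)
  obtain ⟨q, hq, h1, h2⟩ := hB p hp
  obtain ⟨δ₁, hδ₁, H₁⟩ := lower_aux f hf p.1 q.1 h1
  obtain ⟨δ₂, hδ₂, H₂⟩ := upper_aux f hf p.2 q.2 h2
  set δ := min δ₁ δ₂ with hδdef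
  have hδ : 0 < δ := lt_min hδ₁ hδ₂
  have htend := hXY δ hδ
  have hev : ∀ᶠ n in atTop, μ {ω | δ < |f (X n ω) - f (Y n ω)|} < ENNReal.ofReal (ε / 2) := by
    exact htend.eventually_lt_const (by positivity)
  obtain ⟨N₂, hN₂⟩ := eventually_atTop.mp hev
  refine ⟨max N₁ N₂, q, hq, fun n hn => ?_⟩
  have hn₁ : n > N₁ := lt_of_le_of_lt (le_max_left _ _) hn
  have hn₂ : n ≥ N₂ := le_of_lt (lt_of_le_of_lt (le_max_right _ _) hn)
  have hsub : {ω | ¬ MemEInterval q (Y n ω)} ⊆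
      {ω | ¬ MemEInterval p (X n ω)} ∪ {ω | δ < |f (X n ω) - f (Y n ω)|} := by
    intro ω hω
    by_contra hc
    simp only [Set.mem_union, Set.mem_setOf_eq, not_or, not_not, not_lt] at hc
    obtain ⟨hmem, hle⟩ := hc
    exact hω ⟨H₁ _ _ hmem.1 (hle.trans (min_le_left _ _)),
      H₂ _ _ hmem.2 (hle.trans (min_le_right _ _))⟩
  calc μ {ω | ¬ MemEInterval q (Y n ω)}
      ≤ μ ({ω | ¬ MemEInterval p (X n ω)} ∪ {ω | δ < |f (X n ω) - f (Y n ω)|}) :=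
        measure_mono hsub
    _ ≤ μ {ω | ¬ MemEInterval p (X n ω)} + μ {ω | δ < |f (X n ω) - f (Y n ω)|} :=
        measure_union_le _ _
    _ < ENNReal.ofReal (ε / 2) + ENNReal.ofReal (ε / 2) :=
        ENNReal.add_lt_add (hN₁ n hn₁) (hN₂ n hn₂)
    _ = ENNReal.ofReal ε := by
        rw [← ENNReal.ofReal_add (by positivity) (by positivity)]; ring_nf

/-- **Transitivity of `𝓑`-boundedness in probability.** If `X_n ↔_f Y_n` and `𝓑` has the
enlargement property, then `X` is `𝓑`-bounded in probability iff `Y` is. -/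
theorem bBounded_in_probability_transfer
    (f : ℝ → ℝ) (hf : StrictMono f)
    {Ω : Type*} [MeasurableSpace Ω] (μ : Measure Ω) [IsProbabilityMeasure μ]
    (X Y : ℕ → Ω → ℝ) (hXY : FConvergesTo f μ X Y)
    (B : Set (EReal × EReal)) (hB : EnlargementProperty B) :
    BBoundedInProbability B μ X ↔ BBoundedInProbability B μ Y := by
  have hYX : FConvergesTo f μ Y X := by
    intro δ hδ
    have := hXY δ hδ
    simpa only [abs_sub_comm] using this
  exact ⟨transfer_one_dir f hf μ X Y hXY B hB, transfer_one_dir f hf μ Y X hYX B hB⟩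
end

section
/- Let f : ℝ → ℝ be strictly increasing and let A_n, B_n, C_n, D_n be sequences of real random variables with A_n ↔_f B_n and C_n ↔_f D_n. Suppose B_n is 𝓑₁-bounded in probability and D_n is 𝓑₂-bounded in probability, where 𝓑₁ and 𝓑₂ are collections of open intervals satisfying the enlargement property. Let g : ℝ² → ℝ be a function such that for every I₁ ∈ 𝓑₁ and I₂ ∈ 𝓑₂, the restriction of g to I₁ × I₂ is uniformly continuous as a map from (I₁ × I₂, d_f) to (ℝ, d_f). Then g(A_n, C_n) ↔_f g(B_n, D_n). -/
open MeasureTheory Filter Topology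

private lemma fconv_lower_aux (f : ℝ → ℝ) (hf : StrictMono f) (a a' : EReal)
    (h : a' < a ∨ (a = ⊥ ∧ a' = ⊥)) :
    ∃ η : ℝ, 0 < η ∧ ∀ x y : ℝ, a < (x : EReal) → |f y - f x| < η → a' < (y : EReal) := by
  induction a' using EReal.rec with
  | bot => exact ⟨1, one_pos, fun x y _ _ => EReal.bot_lt_coe y⟩
  | top =>
    rcases h with h | ⟨_, h⟩
    · exact absurd h (not_top_lt)
    · exact absurd h (by simp)
  | coe c =>
    have hca : (c : EReal) < a := by
      rcases h with h | ⟨_, h⟩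
      · exact h
      · exact absurd h (by simp)
    induction a using EReal.rec with
    | bot => exact absurd hca (by simp)
    | top => exact ⟨1, one_pos, fun x y hx _ => absurd hx (by simp)⟩
    | coe r =>
      have hcr : c < r := by exact_mod_cast hca
      refine ⟨f r - f c, sub_pos.mpr (hf hcr), fun x y hx hy => ?_⟩
      have hrx : r < x := by exact_mod_cast hx
      have h1 := abs_lt.mp hy
      have h2 := hf hrx
      have : c < y := hf.lt_iff_lt.mp (by linarith)
      exact_mod_cast this

private lemma fconv_upper_aux (f : ℝ → ℝ) (hf : StrictMono f) (b b' : EReal)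
    (h : b < b' ∨ (b = ⊤ ∧ b' = ⊤)) :
    ∃ η : ℝ, 0 < η ∧ ∀ x y : ℝ, (x : EReal) < b → |f y - f x| < η → (y : EReal) < b' := by
  induction b' using EReal.rec with
  | top => exact ⟨1, one_pos, fun x y _ _ => EReal.coe_lt_top y⟩
  | bot =>
    rcases h with h | ⟨_, h⟩
    · exact absurd h (not_lt_bot)
    · exact absurd h (by simp)
  | coe c =>
    have hbc : b < (c : EReal) := by
      rcases h with h | ⟨_, h⟩
      · exact h
      · exact absurd h (by simp)
    induction b using EReal.rec with
    | top => exact absurd hbc (not_top_lt)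
    | bot => exact ⟨1, one_pos, fun x y hx _ => absurd hx (by simp)⟩
    | coe r =>
      have hrc : r < c := by exact_mod_cast hbc
      refine ⟨f c - f r, sub_pos.mpr (hf hrc), fun x y hx hy => ?_⟩
      have hxr : x < r := by exact_mod_cast hx
      have h1 := abs_lt.mp hy
      have h2 := hf hxr
      have : y < c := hf.lt_iff_lt.mp (by linarith)
      exact_mod_cast this

private lemma fconv_interval_aux (f : ℝ → ℝ) (hf : StrictMono f) (p q : EReal × EReal)
    (h1 : q.1 < p.1 ∨ (p.1 = ⊥ ∧ q.1 = ⊥)) (h2 : p.2 < q.2 ∨ (p.2 = ⊤ ∧ q.2 = ⊤)) :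
    ∃ η : ℝ, 0 < η ∧ ∀ x y : ℝ, MemEInterval p x → |f y - f x| < η → MemEInterval q y := by
  obtain ⟨η₁, hη₁, hk₁⟩ := fconv_lower_aux f hf p.1 q.1 h1
  obtain ⟨η₂, hη₂, hk₂⟩ := fconv_upper_aux f hf p.2 q.2 h2
  refine ⟨min η₁ η₂, lt_min hη₁ hη₂, fun x y hx hy => ?_⟩
  exact ⟨hk₁ x y hx.1 (hy.trans_le (min_le_left _ _)),
    hk₂ x y hx.2 (hy.trans_le (min_le_right _ _))⟩

/-- **Abstract f-convergence composition rule.** If `A_n ↔_f B_n`, `C_n ↔_f D_n`, `B_n` is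
`𝓑₁`-bounded and `D_n` is `𝓑₂`-bounded in probability, and `g : ℝ² → ℝ` restricted to
`I₁ × I₂` is uniformly `(d_f, d_f)`-continuous for every `I₁ ∈ 𝓑₁`, `I₂ ∈ 𝓑₂`, then
`g(A_n, C_n) ↔_f g(B_n, D_n)`. -/
theorem abstract_f_convergence_composition
    (f : ℝ → ℝ) (hf : StrictMono f)
    {Ω : Type*} [MeasurableSpace Ω] (μ : Measure Ω) [IsProbabilityMeasure μ]
    (A B C D : ℕ → Ω → ℝ)
    (hAB : FConvergesTo f μ A B) (hCD : FConvergesTo f μ C D)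
    (B₁ B₂ : Set (EReal × EReal))
    (hB₁ : EnlargementProperty B₁) (hB₂ : EnlargementProperty B₂)
    (hBbdd : BBoundedInProbability B₁ μ B) (hDbdd : BBoundedInProbability B₂ μ D)
    (g : ℝ → ℝ → ℝ)
    (hg : ∀ p₁ ∈ B₁, ∀ p₂ ∈ B₂, ∀ ε : ℝ, 0 < ε → ∃ δ : ℝ, 0 < δ ∧
      ∀ x₁ y₁ x₂ y₂ : ℝ, MemEInterval p₁ x₁ → MemEInterval p₁ y₁ →
        MemEInterval p₂ x₂ → MemEInterval p₂ y₂ →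
        Real.sqrt ((f x₁ - f y₁) ^ 2 + (f x₂ - f y₂) ^ 2) < δ →
        |f (g x₁ x₂) - f (g y₁ y₂)| < ε) :
    FConvergesTo f μ (fun n ω => g (A n ω) (C n ω)) (fun n ω => g (B n ω) (D n ω)) := by
  intro δ hδ
  rw [ENNReal.tendsto_atTop_zero]
  intro ε hε
  set e : ℝ := (min ε 1).toReal / 4 with he_def
  have hmin_ne : min ε 1 ≠ ⊤ := ne_top_of_le_ne_top ENNReal.one_ne_top (min_le_right _ _)
  have hmin_pos : (0 : ENNReal) < min ε 1 := lt_min hε one_pos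
  have he_pos : 0 < e := by
    have := ENNReal.toReal_pos hmin_pos.ne' hmin_ne
    positivity
  obtain ⟨N₁, p₁, hp₁B, hN₁⟩ := hBbdd e he_pos
  obtain ⟨N₂, p₂, hp₂B, hN₂⟩ := hDbdd e he_pos
  obtain ⟨q₁, hq₁B, hq₁l, hq₁r⟩ := hB₁ p₁ hp₁B
  obtain ⟨q₂, hq₂B, hq₂l, hq₂r⟩ := hB₂ p₂ hp₂B
  obtain ⟨δ', hδ'pos, hgδ⟩ := hg q₁ hq₁B q₂ hq₂B δ hδ
  obtain ⟨η₁, hη₁, hkey₁⟩ := fconv_interval_aux f hf p₁ q₁ hq₁l hq₁r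
  obtain ⟨η₂, hη₂, hkey₂⟩ := fconv_interval_aux f hf p₂ q₂ hq₂l hq₂r
  set η : ℝ := min (min η₁ η₂) (δ' / 2) / 2 with hη_def
  have hη : 0 < η := by positivity
  have hηlt₁ : η < η₁ := by
    have h1 : min (min η₁ η₂) (δ' / 2) ≤ η₁ := le_trans (min_le_left _ _) (min_le_left _ _)
    have h2 : 0 < min (min η₁ η₂) (δ' / 2) := lt_min (lt_min hη₁ hη₂) (by positivity)
    rw [hη_def]; linarith
  have hηlt₂ : η < η₂ := by
    have h1 : min (min η₁ η₂) (δ' / 2) ≤ η₂ := le_trans (min_le_left _ _) (min_le_right _ _)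
    have h2 : 0 < min (min η₁ η₂) (δ' / 2) := lt_min (lt_min hη₁ hη₂) (by positivity)
    rw [hη_def]; linarith
  have hη2δ : 2 * η < δ' := by
    have h1 : min (min η₁ η₂) (δ' / 2) ≤ δ' / 2 := min_le_right _ _
    rw [hη_def]; linarith
  have hofe : (0 : ENNReal) < ENNReal.ofReal e := ENNReal.ofReal_pos.mpr he_pos
  obtain ⟨N₃, hN₃⟩ := eventually_atTop.mp ((hAB η hη).eventually_lt_const hofe)
  obtain ⟨N₄, hN₄⟩ := eventually_atTop.mp ((hCD η hη).eventually_lt_const hofe)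
  refine ⟨max (max N₁ N₂) (max N₃ N₄) + 1, fun n hn => ?_⟩
  have hn₁ : n > N₁ := by omega
  have hn₂ : n > N₂ := by omega
  have hn₃ : n ≥ N₃ := by omega
  have hn₄ : n ≥ N₄ := by omega
  have hsub : {ω | δ < |f (g (A n ω) (C n ω)) - f (g (B n ω) (D n ω))|} ⊆
      {ω | ¬ MemEInterval p₁ (B n ω)} ∪ ({ω | ¬ MemEInterval p₂ (D n ω)} ∪
      ({ω | η < |f (A n ω) - f (B n ω)|} ∪ {ω | η < |f (C n ω) - f (D n ω)|})) := by
    intro ω hω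
    by_contra hc
    simp only [Set.mem_union, Set.mem_setOf_eq, not_or, not_lt, not_not] at hc
    obtain ⟨hBp, hDp, hA, hC⟩ := hc
    have hBq : MemEInterval q₁ (B n ω) :=
      hkey₁ _ _ hBp (by simpa using hη₁)
    have hAq : MemEInterval q₁ (A n ω) :=
      hkey₁ _ _ hBp (lt_of_le_of_lt hA hηlt₁)
    have hDq : MemEInterval q₂ (D n ω) :=
      hkey₂ _ _ hDp (by simpa using hη₂)
    have hCq : MemEInterval q₂ (C n ω) :=
      hkey₂ _ _ hDp (lt_of_le_of_lt hC hηlt₂)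
    have habs₁ : |f (A n ω) - f (B n ω)| ≤ η := hA
    have habs₂ : |f (C n ω) - f (D n ω)| ≤ η := hC
    have hsqrt : Real.sqrt ((f (A n ω) - f (B n ω)) ^ 2 + (f (C n ω) - f (D n ω)) ^ 2) < δ' := by
      have hle : Real.sqrt ((f (A n ω) - f (B n ω)) ^ 2 + (f (C n ω) - f (D n ω)) ^ 2) ≤
          |f (A n ω) - f (B n ω)| + |f (C n ω) - f (D n ω)| := by
        rw [show |f (A n ω) - f (B n ω)| + |f (C n ω) - f (D n ω)| =
            Real.sqrt ((|f (A n ω) - f (B n ω)| + |f (C n ω) - f (D n ω)|) ^ 2) by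
          rw [Real.sqrt_sq (by positivity)]]
        apply Real.sqrt_le_sqrt
        have h1 := abs_nonneg (f (A n ω) - f (B n ω))
        have h2 := abs_nonneg (f (C n ω) - f (D n ω))
        have h3 := sq_abs (f (A n ω) - f (B n ω))
        have h4 := sq_abs (f (C n ω) - f (D n ω))
        nlinarith
      linarith
    have := hgδ _ _ _ _ hAq hBq hCq hDq hsqrt
    simp only [Set.mem_setOf_eq] at hω
    linarith
  have hb₁ := hN₁ n hn₁
  have hb₂ := hN₂ n hn₂
  have hb₃ := hN₃ n hn₃
  have hb₄ := hN₄ n hn₄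
  have hsum : μ {ω | δ < |f (g (A n ω) (C n ω)) - f (g (B n ω) (D n ω))|} ≤
      ENNReal.ofReal e + (ENNReal.ofReal e + (ENNReal.ofReal e + ENNReal.ofReal e)) := by
    refine (measure_mono hsub).trans ?_
    refine (measure_union_le _ _).trans (add_le_add hb₁.le ?_)
    refine (measure_union_le _ _).trans (add_le_add hb₂.le ?_)
    exact (measure_union_le _ _).trans (add_le_add hb₃.le hb₄.le)
  refine hsum.trans ?_
  have h4e : ENNReal.ofReal e + (ENNReal.ofReal e + (ENNReal.ofReal e + ENNReal.ofReal e)) =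
      ENNReal.ofReal (e + (e + (e + e))) := by
    rw [ENNReal.ofReal_add he_pos.le (by positivity),
      ENNReal.ofReal_add he_pos.le (by positivity),
      ENNReal.ofReal_add he_pos.le he_pos.le]
  rw [h4e]
  have : e + (e + (e + e)) = (min ε 1).toReal := by rw [he_def]; ring
  rw [this, ENNReal.ofReal_toReal hmin_ne]
  exact min_le_left _ _
end

section
/- Let f : ℝ → ℝ be continuous, strictly increasing, and bounded; let Φ denote the standard normal CDF. Let A_n, B_n, C_n, D_n be sequences of real random variables with A_n ↔_f B_n and C_n ↔_f D_n. Then: (1) A_n + C_n ↔_f B_n + D_n provided B_n is bounded in probability; (2) A_n − C_n ↔_f B_n − D_n provided B_n is bounded in probability; (3) A_n·C_n ↔_f B_n·D_n provided B_n is positively log-bounded in probability; (4) min{A_n, C_n} ↔_f min{B_n, D_n}; and (5) for any fixed b ∈ (0,1), setting Clip_{a,b'}(x) := max{a, min{x, b'}} and g(x, y) := Clip_{0,∞}(Φ⁻¹(Clip_{0,b}(x) · Φ(y))), one has g(A_n, C_n) ↔_f g(B_n, D_n). -/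
open MeasureTheory ProbabilityTheory Filter Topology

/-- `X` is bounded in probability. -/
def BoundedInProbability {Ω : Type*} [MeasurableSpace Ω] (μ : Measure Ω)
    (X : ℕ → Ω → ℝ) : Prop :=
  ∀ ε : ℝ, 0 < ε → ∃ N : ℕ, ∃ c : ℝ, 0 < c ∧ ∀ n > N,
    μ {ω | ¬ (-c < X n ω ∧ X n ω < c)} < ENNReal.ofReal ε

/-- `X` is positively log-bounded in probability. -/
def PosLogBoundedInProbability {Ω : Type*} [MeasurableSpace Ω] (μ : Measure Ω)
    (X : ℕ → Ω → ℝ) : Prop :=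
  ∀ ε : ℝ, 0 < ε → ∃ N : ℕ, ∃ c : ℝ, 1 < c ∧ ∀ n > N,
    μ {ω | ¬ (1 / c < X n ω ∧ X n ω < c)} < ENNReal.ofReal ε

/-- The inverse standard normal CDF on `(0, 1)` (with the convention, matching
`Φ⁻¹(0) = −∞` after clipping at `0`, that it is junk `0` for arguments `≤ 0`). -/
noncomputable def stdGaussianCDFInv (p : ℝ) : ℝ := sSup {z : ℝ | stdGaussianCDF z ≤ p}

open Set

/-! Extend `f` by its limits to a continuous injection `F : EReal → ℝ`. Since `EReal = [-∞, ∞]` is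
compact, `F` is an embedding, so `d_f` is the restriction to `ℝ` of a metric inducing the topology
of `EReal`. Sums, differences, products and the clipped quantile map extend to maps
`EReal × EReal → EReal` that are continuous at every point whose first coordinate lies in a compact
set `K` (`K ⊆ ℝ` for `+` and `-`, `K ⊆ (0, ∞)` for `·`, `K = EReal` for the quantile map), hence by
Heine–Cantor they are uniformly `d_f`-continuous at `K × EReal`; `min` is so on all of `ℝ × ℝ`
because `f` commutes with `min`. The event that the outputs are `d_f`-far is then covered by
`B_n ∉ K` and the two events that the inputs are `d_f`-far, and the boundedness assumptions on `B_n`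
make the first one small. -/

theorem IsCompact.exists_pos_forall_dist_lt_of_isEmbedding {X E M : Type*} [TopologicalSpace X]
    [PseudoMetricSpace E] [PseudoMetricSpace M] {e : X → E} (he : Topology.IsEmbedding e)
    {S : Set X} (hS : IsCompact S) {H : X → M} (hH : ∀ x ∈ S, ContinuousAt H x)
    {δ : ℝ} (hδ : 0 < δ) :
    ∃ η > 0, ∀ p ∈ S, ∀ q, dist (e p) (e q) < η → dist (H p) (H q) < δ := by
  -- the uniformity pulled back along `e` induces the topology of `X`
  let _ : UniformSpace X := (UniformSpace.comap e inferInstance).replaceTopology he.eq_induced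
  obtain ⟨t, ht, hts⟩ :=
    hS.uniformContinuousAt_of_continuousAt H hH (Metric.dist_mem_uniformity hδ)
  obtain ⟨η, hη, hηt⟩ := Metric.mem_uniformity_dist.1 ht
  exact ⟨η, hη, fun p hp q hpq => hts (a := (p, q)) (hηt hpq) hp⟩

noncomputable def extendEReal (f : ℝ → ℝ) (l u : ℝ) : EReal → ℝ :=
  fun x => if x = ⊥ then l else if x = ⊤ then u else f x.toReal

section extendEReal

variable {f : ℝ → ℝ} {l u : ℝ}

@[simp] lemma extendEReal_coe (x : ℝ) : extendEReal f l u x = f x := by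
  simp [extendEReal]

@[simp] lemma extendEReal_bot : extendEReal f l u ⊥ = l := by simp [extendEReal]

@[simp] lemma extendEReal_top : extendEReal f l u ⊤ = u := by simp [extendEReal]

lemma extendEReal_comp_coe : extendEReal f l u ∘ Real.toEReal = f :=
  funext extendEReal_coe

lemma continuous_extendEReal (hf : Continuous f) (hl : Tendsto f atBot (𝓝 l))
    (hu : Tendsto f atTop (𝓝 u)) : Continuous (extendEReal f l u) := by
  refine continuous_iff_continuousAt.2 fun x => ?_
  induction x using EReal.rec with
  | bot =>
    rw [← continuousWithinAt_compl_self, ContinuousWithinAt, EReal.nhdsWithin_bot,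
      tendsto_map'_iff, extendEReal_comp_coe, extendEReal_bot]
    exact hl
  | top =>
    rw [← continuousWithinAt_compl_self, ContinuousWithinAt, EReal.nhdsWithin_top,
      tendsto_map'_iff, extendEReal_comp_coe, extendEReal_top]
    exact hu
  | coe x =>
    rw [ContinuousAt, EReal.nhds_coe, tendsto_map'_iff, extendEReal_comp_coe, extendEReal_coe]
    exact hf.continuousAt

lemma strictMono_extendEReal (hf : StrictMono f) (hl : Tendsto f atBot (𝓝 l))
    (hu : Tendsto f atTop (𝓝 u)) : StrictMono (extendEReal f l u) := by
  have hfl (x : ℝ) : l < f x := (hf.monotone.le_of_tendsto hl (x - 1)).trans_lt (hf (sub_one_lt x))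
  have hfu (x : ℝ) : f x < u := (hf (lt_add_one x)).trans_le (hf.monotone.ge_of_tendsto hu _)
  intro a b hab
  induction a using EReal.rec <;> induction b using EReal.rec <;>
    simp_all [(hfl 0).trans (hfu 0), hf.lt_iff_lt]

lemma extendEReal_mem_Icc (hf : Monotone f) (hl : Tendsto f atBot (𝓝 l))
    (hu : Tendsto f atTop (𝓝 u)) (x : EReal) : extendEReal f l u x ∈ Icc l u := by
  induction x using EReal.rec with
  | bot => simpa using (hf.le_of_tendsto hl 0).trans (hf.ge_of_tendsto hu 0)
  | coe x => simpa using ⟨hf.le_of_tendsto hl x, hf.ge_of_tendsto hu x⟩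
  | top => simpa using (hf.le_of_tendsto hl 0).trans (hf.ge_of_tendsto hu 0)

end extendEReal

lemma continuous_cdf_of_measure_singleton {μ : Measure ℝ} [IsProbabilityMeasure μ]
    (hμ : ∀ x, μ {x} = 0) : Continuous (cdf μ) := by
  refine continuous_iff_continuousAt.2 fun x => ?_
  have hleft : Function.leftLim (cdf μ) x = cdf μ x := by
    have h := (cdf μ).measure_singleton x
    rw [measure_cdf, hμ, eq_comm, ENNReal.ofReal_eq_zero, sub_nonpos] at h
    exact le_antisymm ((cdf μ).mono.leftLim_le le_rfl) h
  refine continuousAt_iff_continuous_left_right.2 ⟨?_, (cdf μ).right_continuous x⟩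
  exact continuousWithinAt_Iio_iff_Iic.1
    ((cdf μ).mono.continuousWithinAt_Iio_iff_leftLim_eq.2 hleft)

lemma strictMono_cdf_of_measure_Ioc_ne_zero {μ : Measure ℝ} [IsProbabilityMeasure μ]
    (hμ : ∀ x y, x < y → μ (Ioc x y) ≠ 0) : StrictMono (cdf μ) := by
  intro x y hxy
  have h := hμ x y hxy
  rwa [← measure_cdf (μ := μ), StieltjesFunction.measure_Ioc, ne_eq, ENNReal.ofReal_eq_zero,
    not_le, sub_pos] at h

lemma stdGaussianCDF_eq_cdf : stdGaussianCDF = cdf (gaussianReal 0 1) := by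
  funext x
  rw [cdf_eq_real]
  rfl

lemma continuous_stdGaussianCDF : Continuous stdGaussianCDF := by
  rw [stdGaussianCDF_eq_cdf]
  exact continuous_cdf_of_measure_singleton fun x =>
    gaussianReal_absolutelyContinuous 0 one_ne_zero (Real.volume_singleton)

lemma strictMono_stdGaussianCDF : StrictMono stdGaussianCDF := by
  rw [stdGaussianCDF_eq_cdf]
  refine strictMono_cdf_of_measure_Ioc_ne_zero fun x y hxy h => ?_
  have := gaussianReal_absolutelyContinuous' 0 one_ne_zero h
  simp only [Real.volume_Ioc, ENNReal.ofReal_eq_zero, tsub_le_iff_right, zero_add] at this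
  linarith

lemma tendsto_stdGaussianCDF_atBot : Tendsto stdGaussianCDF atBot (𝓝 0) :=
  stdGaussianCDF_eq_cdf ▸ tendsto_cdf_atBot _

lemma tendsto_stdGaussianCDF_atTop : Tendsto stdGaussianCDF atTop (𝓝 1) :=
  stdGaussianCDF_eq_cdf ▸ tendsto_cdf_atTop _

lemma stdGaussianCDF_mem_Ioo (z : ℝ) : stdGaussianCDF z ∈ Ioo 0 1 :=
  ⟨(strictMono_stdGaussianCDF.monotone.le_of_tendsto tendsto_stdGaussianCDF_atBot (z - 1)).trans_lt
      (strictMono_stdGaussianCDF (sub_one_lt z)),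
    (strictMono_stdGaussianCDF (lt_add_one z)).trans_le
      (strictMono_stdGaussianCDF.monotone.ge_of_tendsto tendsto_stdGaussianCDF_atTop _)⟩

lemma stdGaussianCDFInv_stdGaussianCDF (z : ℝ) : stdGaussianCDFInv (stdGaussianCDF z) = z := by
  have h : {x | stdGaussianCDF x ≤ stdGaussianCDF z} = Iic z :=
    ext fun _ => strictMono_stdGaussianCDF.le_iff_le
  rw [stdGaussianCDFInv, h, csSup_Iic]

lemma Ioo_subset_range_stdGaussianCDF : Ioo 0 1 ⊆ range stdGaussianCDF := fun _ hp =>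
  mem_range_of_exists_le_of_exists_ge continuous_stdGaussianCDF
    (tendsto_stdGaussianCDF_atBot.eventually (eventually_le_nhds hp.1)).exists
    (tendsto_stdGaussianCDF_atTop.eventually (eventually_ge_nhds hp.2)).exists

lemma stdGaussianCDFInv_nonpos {p : ℝ} (hp : p ≤ stdGaussianCDF 0) : stdGaussianCDFInv p ≤ 0 :=
  Real.sSup_nonpos fun _ hz => strictMono_stdGaussianCDF.le_iff_le.1 (le_trans hz hp)

lemma continuousAt_stdGaussianCDFInv {p : ℝ} (hp : p ∈ Ioo 0 1) :
    ContinuousAt stdGaussianCDFInv p := by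
  have hmono : StrictMonoOn stdGaussianCDFInv (Ioo 0 1) := by
    rintro _ hp _ hq hpq
    obtain ⟨z, rfl⟩ := Ioo_subset_range_stdGaussianCDF hp
    obtain ⟨w, rfl⟩ := Ioo_subset_range_stdGaussianCDF hq
    simpa [stdGaussianCDFInv_stdGaussianCDF] using strictMono_stdGaussianCDF.lt_iff_lt.1 hpq
  have himage : stdGaussianCDFInv '' Ioo 0 1 = univ :=
    eq_univ_of_forall fun z =>
      ⟨stdGaussianCDF z, stdGaussianCDF_mem_Ioo z, stdGaussianCDFInv_stdGaussianCDF z⟩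
  exact hmono.continuousAt_of_image_mem_nhds (isOpen_Ioo.mem_nhds hp) (himage ▸ univ_mem)

-- `max 0 ∘ Φ⁻¹` vanishes on `(-∞, Φ 0]`, which hides the blow-up of `Φ⁻¹` at `0`.
lemma continuousAt_max_zero_stdGaussianCDFInv {p : ℝ} (hp : p < 1) :
    ContinuousAt (fun q => max 0 (stdGaussianCDFInv q)) p := by
  rcases lt_or_ge p (stdGaussianCDF 0) with hp0 | hp0
  · refine (continuousAt_const (y := 0)).congr ?_
    filter_upwards [eventually_lt_nhds hp0] with q hq
    exact (max_eq_left (stdGaussianCDFInv_nonpos hq.le)).symm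
  · exact continuousAt_const.max (continuousAt_stdGaussianCDFInv
      ⟨(stdGaussianCDF_mem_Ioo 0).1.trans_le hp0, hp⟩)

/-- `G` is uniformly continuous for `d_f` at the points of `K × ℝ`. -/
def FUniformContinuousOn (f : ℝ → ℝ) (G : ℝ → ℝ → ℝ) (K : Set ℝ) : Prop :=
  ∀ δ > 0, ∃ η > 0, ∀ a b c d : ℝ, b ∈ K → |f a - f b| ≤ η → |f c - f d| ≤ η →
    |f (G a c) - f (G b d)| ≤ δ

section FUniformContinuousOn

variable {f : ℝ → ℝ} {l u : ℝ} {G : ℝ → ℝ → ℝ}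

lemma FUniformContinuousOn.mono {K₁ K₂ : Set ℝ} (h : FUniformContinuousOn f G K₂)
    (hK : K₁ ⊆ K₂) : FUniformContinuousOn f G K₁ := fun δ hδ =>
  let ⟨η, hη, hGη⟩ := h δ hδ
  ⟨η, hη, fun a b c d hb => hGη a b c d (hK hb)⟩

lemma fUniformContinuousOn_of_continuousAt (hf : Continuous f) (hf_mono : StrictMono f)
    (hl : Tendsto f atBot (𝓝 l)) (hu : Tendsto f atTop (𝓝 u)) {K : Set EReal}
    (hK : IsCompact K) {G' : EReal × EReal → EReal} (hG' : ∀ x ∈ K, ∀ y, ContinuousAt G' (x, y))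
    (hGG' : ∀ a c : ℝ, G' (a, c) = G a c) : FUniformContinuousOn f G (Real.toEReal ⁻¹' K) := by
  set F := extendEReal f l u
  have hF : Continuous F := continuous_extendEReal hf hl hu
  have hF_inj : Function.Injective F := (strictMono_extendEReal hf_mono hl hu).injective
  have he : Topology.IsEmbedding (Prod.map F F) :=
    ((hF.prodMap hF).isClosedEmbedding (hF_inj.prodMap hF_inj)).isEmbedding
  intro δ hδ
  obtain ⟨η, hη, hFG'⟩ := (hK.prod isCompact_univ).exists_pos_forall_dist_lt_of_isEmbedding he
    (H := F ∘ G') (fun p hp => hF.continuousAt.comp (hG' p.1 hp.1 p.2)) hδ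
  refine ⟨η / 2, half_pos hη, fun a b c d hb hab hcd => ?_⟩
  have hdist : dist (Prod.map F F (b, d)) (Prod.map F F (a, c)) < η := by
    rw [Prod.dist_eq, max_lt_iff]
    simp only [Prod.map, F, extendEReal_coe, Real.dist_eq, abs_sub_comm (f b), abs_sub_comm (f d)]
    constructor <;> linarith
  have := hFG' (b, d) ⟨hb, trivial⟩ (a, c) hdist
  simp only [Function.comp, hGG', F, extendEReal_coe, Real.dist_eq] at this
  rw [abs_sub_comm]
  exact this.le

lemma fUniformContinuousOn_add (hf : Continuous f) (hf_mono : StrictMono f)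
    (hl : Tendsto f atBot (𝓝 l)) (hu : Tendsto f atTop (𝓝 u)) (a b : ℝ) :
    FUniformContinuousOn f (· + ·) (Icc a b) := by
  refine (fUniformContinuousOn_of_continuousAt hf hf_mono hl hu
    (isCompact_Icc.image continuous_coe_real_ereal) (G' := fun p => p.1 + p.2) ?_
    fun x y => (EReal.coe_add x y).symm).mono (subset_preimage_image _ _)
  rintro _ ⟨x, -, rfl⟩ y
  exact EReal.continuousAt_add (.inl (EReal.coe_ne_top x)) (.inl (EReal.coe_ne_bot x))

lemma fUniformContinuousOn_sub (hf : Continuous f) (hf_mono : StrictMono f)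
    (hl : Tendsto f atBot (𝓝 l)) (hu : Tendsto f atTop (𝓝 u)) (a b : ℝ) :
    FUniformContinuousOn f (· - ·) (Icc a b) := by
  refine (fUniformContinuousOn_of_continuousAt hf hf_mono hl hu
    (isCompact_Icc.image continuous_coe_real_ereal) (G' := fun p => p.1 + -p.2) ?_
    fun x y => by rw [← sub_eq_add_neg, EReal.coe_sub]).mono (subset_preimage_image _ _)
  rintro _ ⟨x, -, rfl⟩ y
  exact (EReal.continuousAt_add (.inl (EReal.coe_ne_top x)) (.inl (EReal.coe_ne_bot x))).comp
    (continuous_fst.prodMk continuous_snd.neg).continuousAt (x := ((x : EReal), y))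

lemma fUniformContinuousOn_mul (hf : Continuous f) (hf_mono : StrictMono f)
    (hl : Tendsto f atBot (𝓝 l)) (hu : Tendsto f atTop (𝓝 u)) {a : ℝ} (ha : 0 < a) (b : ℝ) :
    FUniformContinuousOn f (· * ·) (Icc a b) := by
  refine (fUniformContinuousOn_of_continuousAt hf hf_mono hl hu
    (isCompact_Icc.image continuous_coe_real_ereal) (G' := fun p => p.1 * p.2) ?_
    fun x y => (EReal.coe_mul x y).symm).mono (subset_preimage_image _ _)
  rintro _ ⟨x, hx, rfl⟩ y
  have hx0 : (x : EReal) ≠ 0 := EReal.coe_ne_zero.2 (ha.trans_le hx.1).ne'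
  exact EReal.continuousAt_mul (.inl hx0) (.inl hx0) (.inl (EReal.coe_ne_bot x))
    (.inl (EReal.coe_ne_top x))

lemma fUniformContinuousOn_min (hf_mono : Monotone f) : FUniformContinuousOn f min univ :=
  fun δ hδ => ⟨δ, hδ, fun a b c d _ hab hcd => by
    simpa only [hf_mono.map_min] using (abs_min_sub_min_le_max _ _ _ _).trans (max_le hab hcd)⟩

noncomputable def clippedQuantileMap (b x y : ℝ) : ℝ :=
  max 0 (stdGaussianCDFInv (max 0 (min x b) * stdGaussianCDF y))

-- Extending `max 0 (min · b)` and `Φ` by their limits as well, the argument of `Φ⁻¹` becomes a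
-- continuous function on `EReal × EReal` with values in `[0, b] ⊆ (-∞, 1)`.
lemma fUniformContinuousOn_clippedQuantileMap (hf : Continuous f) (hf_mono : StrictMono f)
    (hl : Tendsto f atBot (𝓝 l)) (hu : Tendsto f atTop (𝓝 u)) {b : ℝ} (hb0 : 0 < b)
    (hb1 : b < 1) :
    FUniformContinuousOn f (clippedQuantileMap b) univ := by
  have hclip_bot : Tendsto (fun x : ℝ => max 0 (min x b)) atBot (𝓝 0) :=
    tendsto_const_nhds.congr' <| (eventually_le_atBot 0).mono fun x hx =>
      (max_eq_left ((min_le_left x b).trans hx)).symm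
  have hclip_top : Tendsto (fun x : ℝ => max 0 (min x b)) atTop (𝓝 b) :=
    tendsto_const_nhds.congr' <| (eventually_ge_atTop b).mono fun x hx => by
      simp [min_eq_right hx, hb0.le]
  set clip := extendEReal (fun x => max 0 (min x b)) 0 b
  set Φ := extendEReal stdGaussianCDF 0 1
  have hclip : Continuous clip := continuous_extendEReal (by fun_prop) hclip_bot hclip_top
  have hΦ : Continuous Φ := continuous_extendEReal continuous_stdGaussianCDF
    tendsto_stdGaussianCDF_atBot tendsto_stdGaussianCDF_atTop
  have hlt (p : EReal × EReal) : clip p.1 * Φ p.2 < 1 := by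
    have h₁ := extendEReal_mem_Icc (monotone_const.max (monotone_id.min monotone_const))
      hclip_bot hclip_top p.1
    have h₂ := extendEReal_mem_Icc strictMono_stdGaussianCDF.monotone
      tendsto_stdGaussianCDF_atBot tendsto_stdGaussianCDF_atTop p.2
    exact (mul_le_of_le_one_right h₁.1 h₂.2).trans_lt (h₁.2.trans_lt hb1)
  refine (fUniformContinuousOn_of_continuousAt hf hf_mono hl hu isCompact_univ
    (G' := fun p => ((max 0 (stdGaussianCDFInv (clip p.1 * Φ p.2)) : ℝ) : EReal))
    (fun x _ y => ?_) fun x y => by simp [clip, Φ, clippedQuantileMap]).mono fun _ _ => trivial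
  exact continuous_coe_real_ereal.continuousAt.comp <|
    ContinuousAt.comp (f := fun p : EReal × EReal => clip p.1 * Φ p.2)
      (continuousAt_max_zero_stdGaussianCDFInv (hlt (x, y))) (by fun_prop)

end FUniformContinuousOn

theorem FConvergesTo.comp₂ {f : ℝ → ℝ} {Ω : Type*} [MeasurableSpace Ω] {μ : Measure Ω}
    {A B C D : ℕ → Ω → ℝ} {G : ℝ → ℝ → ℝ} (hAB : FConvergesTo f μ A B)
    (hCD : FConvergesTo f μ C D)
    (hG : ∀ ε : ℝ, 0 < ε → ∃ K : Set ℝ,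
      (∀ᶠ n in atTop, μ {ω | B n ω ∉ K} < ENNReal.ofReal ε) ∧ FUniformContinuousOn f G K) :
    FConvergesTo f μ (fun n ω => G (A n ω) (C n ω)) (fun n ω => G (B n ω) (D n ω)) := by
  intro δ hδ
  refine ENNReal.tendsto_nhds_zero.2 fun ε hε => ?_
  have hε3 : 0 < ε / 3 := ENNReal.div_pos hε.ne' ENNReal.ofNat_ne_top
  obtain ⟨r, -, hr, hrε⟩ := ENNReal.lt_iff_exists_real_btwn.1 hε3
  obtain ⟨K, hBK, hGK⟩ := hG r (ENNReal.ofReal_pos.1 hr)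
  obtain ⟨η, hη, hGη⟩ := hGK δ hδ
  filter_upwards [hBK, ENNReal.tendsto_nhds_zero.1 (hAB η hη) _ hε3,
    ENNReal.tendsto_nhds_zero.1 (hCD η hη) _ hε3] with n hBn hABn hCDn
  have hbad : {ω | δ < |f (G (A n ω) (C n ω)) - f (G (B n ω) (D n ω))|} ⊆
      {ω | B n ω ∉ K} ∪ {ω | η < |f (A n ω) - f (B n ω)|} ∪
        {ω | η < |f (C n ω) - f (D n ω)|} := by
    intro ω hω
    by_contra h
    simp only [mem_union, not_or] at h
    obtain ⟨⟨hK, hA⟩, hC⟩ := h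
    exact hω.not_ge (hGη _ _ _ _ (not_not.1 hK) (not_lt.1 hA) (not_lt.1 hC))
  calc _ ≤ _ := measure_mono hbad
    _ ≤ μ {ω | B n ω ∉ K} + μ {ω | η < |f (A n ω) - f (B n ω)|} +
          μ {ω | η < |f (C n ω) - f (D n ω)|} :=
        (measure_union_le _ _).trans (add_le_add_left (measure_union_le _ _) _)
    _ ≤ ε / 3 + ε / 3 + ε / 3 := by gcongr; exact (hBn.trans hrε).le
    _ = ε := ENNReal.add_thirds ε

lemma BoundedInProbability.eventually_measure_not_mem_Ioo {Ω : Type*} [MeasurableSpace Ω]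
    {μ : Measure Ω} {B : ℕ → Ω → ℝ} (hB : BoundedInProbability μ B) {ε : ℝ} (hε : 0 < ε) :
    ∃ c, ∀ᶠ n in atTop, μ {ω | B n ω ∉ Ioo (-c) c} < ENNReal.ofReal ε :=
  let ⟨N, c, _, hN⟩ := hB ε hε
  ⟨c, (eventually_gt_atTop N).mono hN⟩

lemma PosLogBoundedInProbability.eventually_measure_not_mem_Ioo {Ω : Type*}
    [MeasurableSpace Ω] {μ : Measure Ω} {B : ℕ → Ω → ℝ} (hB : PosLogBoundedInProbability μ B)
    {ε : ℝ} (hε : 0 < ε) :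
    ∃ c, 0 < c ∧ ∀ᶠ n in atTop, μ {ω | B n ω ∉ Ioo (1 / c) c} < ENNReal.ofReal ε :=
  let ⟨N, c, hc, hN⟩ := hB ε hε
  ⟨c, one_pos.trans hc, (eventually_gt_atTop N).mono hN⟩

section Rules

variable {f : ℝ → ℝ} {l u : ℝ} {Ω : Type*} [MeasurableSpace Ω] {μ : Measure Ω}
  {A B C D : ℕ → Ω → ℝ}

theorem FConvergesTo.add (hf : Continuous f) (hf_mono : StrictMono f)
    (hl : Tendsto f atBot (𝓝 l)) (hu : Tendsto f atTop (𝓝 u)) (hAB : FConvergesTo f μ A B)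
    (hCD : FConvergesTo f μ C D) (hB : BoundedInProbability μ B) :
    FConvergesTo f μ (fun n ω => A n ω + C n ω) (fun n ω => B n ω + D n ω) := by
  refine hAB.comp₂ (G := (· + ·)) hCD fun ε hε => ?_
  obtain ⟨c, hc⟩ := hB.eventually_measure_not_mem_Ioo hε
  exact ⟨_, hc, (fUniformContinuousOn_add hf hf_mono hl hu _ _).mono Ioo_subset_Icc_self⟩

theorem FConvergesTo.sub (hf : Continuous f) (hf_mono : StrictMono f)
    (hl : Tendsto f atBot (𝓝 l)) (hu : Tendsto f atTop (𝓝 u)) (hAB : FConvergesTo f μ A B)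
    (hCD : FConvergesTo f μ C D) (hB : BoundedInProbability μ B) :
    FConvergesTo f μ (fun n ω => A n ω - C n ω) (fun n ω => B n ω - D n ω) := by
  refine hAB.comp₂ (G := (· - ·)) hCD fun ε hε => ?_
  obtain ⟨c, hc⟩ := hB.eventually_measure_not_mem_Ioo hε
  exact ⟨_, hc, (fUniformContinuousOn_sub hf hf_mono hl hu _ _).mono Ioo_subset_Icc_self⟩

theorem FConvergesTo.mul (hf : Continuous f) (hf_mono : StrictMono f)
    (hl : Tendsto f atBot (𝓝 l)) (hu : Tendsto f atTop (𝓝 u)) (hAB : FConvergesTo f μ A B)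
    (hCD : FConvergesTo f μ C D) (hB : PosLogBoundedInProbability μ B) :
    FConvergesTo f μ (fun n ω => A n ω * C n ω) (fun n ω => B n ω * D n ω) := by
  refine hAB.comp₂ (G := (· * ·)) hCD fun ε hε => ?_
  obtain ⟨c, hc0, hc⟩ := hB.eventually_measure_not_mem_Ioo hε
  exact ⟨_, hc, (fUniformContinuousOn_mul hf hf_mono hl hu (one_div_pos.2 hc0) _).mono
    Ioo_subset_Icc_self⟩

theorem FConvergesTo.min (hf_mono : Monotone f) (hAB : FConvergesTo f μ A B)
    (hCD : FConvergesTo f μ C D) :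
    FConvergesTo f μ (fun n ω => min (A n ω) (C n ω)) (fun n ω => min (B n ω) (D n ω)) :=
  hAB.comp₂ (G := Min.min) hCD fun _ hε =>
    ⟨univ, .of_forall fun _ => by simpa using hε, fUniformContinuousOn_min hf_mono⟩

theorem FConvergesTo.clippedQuantileMap (hf : Continuous f) (hf_mono : StrictMono f)
    (hl : Tendsto f atBot (𝓝 l)) (hu : Tendsto f atTop (𝓝 u)) (hAB : FConvergesTo f μ A B)
    (hCD : FConvergesTo f μ C D) {b : ℝ} (hb0 : 0 < b) (hb1 : b < 1) :
    FConvergesTo f μ (fun n ω => clippedQuantileMap b (A n ω) (C n ω))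
      (fun n ω => clippedQuantileMap b (B n ω) (D n ω)) :=
  hAB.comp₂ hCD fun _ hε => ⟨univ, .of_forall fun _ => by simpa using hε,
    fUniformContinuousOn_clippedQuantileMap hf hf_mono hl hu hb0 hb1⟩

end Rules

theorem concrete_f_convergence_composition_rules_general
    (f : ℝ → ℝ) (hf_cont : Continuous f) (hf_mono : StrictMono f)
    (hf_bdd : ∃ K : ℝ, ∀ x, |f x| ≤ K)
    {Ω : Type*} [MeasurableSpace Ω] (μ : Measure Ω)
    (A B C D : ℕ → Ω → ℝ)
    (hAB : FConvergesTo f μ A B) (hCD : FConvergesTo f μ C D) :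
    (BoundedInProbability μ B →
      FConvergesTo f μ (fun n ω => A n ω + C n ω) (fun n ω => B n ω + D n ω)) ∧
    (BoundedInProbability μ B →
      FConvergesTo f μ (fun n ω => A n ω - C n ω) (fun n ω => B n ω - D n ω)) ∧
    (PosLogBoundedInProbability μ B →
      FConvergesTo f μ (fun n ω => A n ω * C n ω) (fun n ω => B n ω * D n ω)) ∧
    (FConvergesTo f μ (fun n ω => min (A n ω) (C n ω)) (fun n ω => min (B n ω) (D n ω))) ∧
    (∀ b : ℝ, 0 < b → b < 1 →
      FConvergesTo f μ
        (fun n ω => max 0 (stdGaussianCDFInv (max 0 (min (A n ω) b)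
          * stdGaussianCDF (C n ω))))
        (fun n ω => max 0 (stdGaussianCDFInv (max 0 (min (B n ω) b)
          * stdGaussianCDF (D n ω))))) := by
  obtain ⟨M, hM⟩ := hf_bdd
  have hl : Tendsto f atBot (𝓝 (⨅ x, f x)) := tendsto_atBot_ciInf hf_mono.monotone
    ⟨-M, by rintro _ ⟨x, rfl⟩; exact (abs_le.1 (hM x)).1⟩
  have hu : Tendsto f atTop (𝓝 (⨆ x, f x)) := tendsto_atTop_ciSup hf_mono.monotone
    ⟨M, by rintro _ ⟨x, rfl⟩; exact (abs_le.1 (hM x)).2⟩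
  exact ⟨hAB.add hf_cont hf_mono hl hu hCD, hAB.sub hf_cont hf_mono hl hu hCD,
    hAB.mul hf_cont hf_mono hl hu hCD, hAB.min hf_mono.monotone hCD,
    fun _ hb0 hb1 => hAB.clippedQuantileMap hf_cont hf_mono hl hu hCD hb0 hb1⟩

/-- **Concrete f-convergence composition rules.** For `f` continuous, strictly increasing
and bounded, and `A_n ↔_f B_n`, `C_n ↔_f D_n`: (1) sums f-converge when `B_n` is bounded
in probability; (2) differences f-converge when `B_n` is bounded in probability;
(3) products f-converge when `B_n` is positively log-bounded in probability; (4) minima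
f-converge; (5) the clipped truncated-normal-quantile compositions
`(x, y) ↦ Clip_{0,∞}(Φ⁻¹(Clip_{0,b}(x)·Φ(y)))` f-converge, for any fixed `b ∈ (0,1)`. -/
theorem concrete_f_convergence_composition_rules
    (f : ℝ → ℝ) (hf_cont : Continuous f) (hf_mono : StrictMono f)
    (hf_bdd : ∃ K : ℝ, ∀ x, |f x| ≤ K)
    {Ω : Type*} [MeasurableSpace Ω] (μ : Measure Ω) [IsProbabilityMeasure μ]
    (A B C D : ℕ → Ω → ℝ)
    (hAB : FConvergesTo f μ A B) (hCD : FConvergesTo f μ C D) :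
    (BoundedInProbability μ B →
      FConvergesTo f μ (fun n ω => A n ω + C n ω) (fun n ω => B n ω + D n ω)) ∧
    (BoundedInProbability μ B →
      FConvergesTo f μ (fun n ω => A n ω - C n ω) (fun n ω => B n ω - D n ω)) ∧
    (PosLogBoundedInProbability μ B →
      FConvergesTo f μ (fun n ω => A n ω * C n ω) (fun n ω => B n ω * D n ω)) ∧
    (FConvergesTo f μ (fun n ω => min (A n ω) (C n ω)) (fun n ω => min (B n ω) (D n ω))) ∧
    (∀ b : ℝ, 0 < b → b < 1 →
      FConvergesTo f μ
        (fun n ω => max 0 (stdGaussianCDFInv (max 0 (min (A n ω) b)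
          * stdGaussianCDF (C n ω))))
        (fun n ω => max 0 (stdGaussianCDFInv (max 0 (min (B n ω) b)
          * stdGaussianCDF (D n ω))))) :=
  concrete_f_convergence_composition_rules_general f hf_cont hf_mono hf_bdd μ A B C D hAB hCD
end

section
/- Let f₁ and f₂ be continuous, strictly increasing, and bounded functions from ℝ to ℝ, and for k ≥ 1 extend them coordinatewise to ℝ^k, defining the metrics d_{f₁}(x,y) := ‖f₁(x) − f₁(y)‖₂ and d_{f₂}(x,y) := ‖f₂(x) − f₂(y)‖₂ on ℝ^k. Then d_{f₁} and d_{f₂} are uniformly equivalent: the identity map from (ℝ^k, d_{f₁}) to (ℝ^k, d_{f₂}) and its inverse are both uniformly continuous. -/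
open Set

/-- Uniform continuity of the inverse of a continuous strictly monotone function
on a compact interval, in ε-δ form. -/
lemma invUC (f : ℝ → ℝ) (hc : Continuous f) (hm : StrictMono f) (A B : ℝ)
    (η : ℝ) (hη : 0 < η) :
    ∃ δ : ℝ, 0 < δ ∧ ∀ u v, u ∈ Icc A B → v ∈ Icc A B → |f u - f v| < δ → |u - v| < η := by
  set S : Set (ℝ × ℝ) := (Icc A B ×ˢ Icc A B) ∩ {p : ℝ × ℝ | η ≤ |p.1 - p.2|} with hS
  have hcpt : IsCompact S := by
    apply (isCompact_Icc.prod isCompact_Icc).inter_right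
    exact isClosed_le continuous_const ((continuous_fst.sub continuous_snd).abs)
  rcases S.eq_empty_or_nonempty with he | hne
  · refine ⟨1, one_pos, fun u v hu hv _ => ?_⟩
    by_contra h
    have : (u, v) ∈ S := ⟨⟨hu, hv⟩, le_of_not_gt h⟩
    simp [he] at this
  · have hg : ContinuousOn (fun p : ℝ × ℝ => |f p.1 - f p.2|) S :=
      (((hc.comp continuous_fst).sub (hc.comp continuous_snd)).abs).continuousOn
    obtain ⟨p₀, hp₀S, hp₀min⟩ := hcpt.exists_isMinOn hne hg
    have hne12 : p₀.1 ≠ p₀.2 := by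
      intro h
      have := hp₀S.2
      simp only [mem_setOf_eq, h, sub_self, abs_zero] at this
      linarith
    have hδpos : 0 < |f p₀.1 - f p₀.2| := by
      rw [abs_pos, sub_ne_zero]
      exact fun h => hne12 (hm.injective h)
    refine ⟨|f p₀.1 - f p₀.2|, hδpos, fun u v hu hv hlt => ?_⟩
    by_contra h
    have hmem : (u, v) ∈ S := ⟨⟨hu, hv⟩, le_of_not_gt h⟩
    have h2 : |f p₀.1 - f p₀.2| ≤ |f u - f v| := hp₀min hmem
    linarith
lemma clamp_lip (c d u v : ℝ) : |max c (min u d) - max c (min v d)| ≤ |u - v| := by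
  calc |max c (min u d) - max c (min v d)|
      = |max (min u d) c - max (min v d) c| := by rw [max_comm c, max_comm c]
    _ ≤ |min u d - min v d| := abs_max_sub_max_le_abs _ _ _
    _ ≤ max |u - v| |d - d| := abs_min_sub_min_le_max _ _ _ _
    _ = |u - v| := by simp

/-- 1D transfer: closeness in the `f₁`-scale implies closeness in the `f₂`-scale,
uniformly, provided `f₂` is bounded. -/
lemma transfer1D (f₁ f₂ : ℝ → ℝ) (h₁c : Continuous f₁) (h₁m : StrictMono f₁)
    (h₂c : Continuous f₂) (h₂m : StrictMono f₂) (h₂b : ∃ K : ℝ, ∀ x, |f₂ x| ≤ K)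
    (ε : ℝ) (hε : 0 < ε) :
    ∃ δ : ℝ, 0 < δ ∧ ∀ s t, |f₁ s - f₁ t| < δ → |f₂ s - f₂ t| < ε := by
  obtain ⟨K, hK⟩ := h₂b
  have hrne : (Set.range f₂).Nonempty := Set.range_nonempty f₂
  have hbdd : BddAbove (Set.range f₂) :=
    ⟨K, by rintro _ ⟨x, rfl⟩; exact (abs_le.1 (hK x)).2⟩
  have hbddb : BddBelow (Set.range f₂) :=
    ⟨-K, by rintro _ ⟨x, rfl⟩; exact (abs_le.1 (hK x)).1⟩
  set L := sSup (Set.range f₂)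
  set M := sInf (Set.range f₂)
  obtain ⟨_, ⟨b, rfl⟩, hb⟩ := exists_lt_of_lt_csSup hrne (show L - ε/3 < L by linarith)
  obtain ⟨_, ⟨a, rfl⟩, ha⟩ := exists_lt_of_csInf_lt hrne (show M < M + ε/3 by linarith)
  set A := min a b - 1 with hA
  set B := max a b + 1 with hB
  have hAB : A < B := by
    have h1 : min a b ≤ max a b := le_trans (min_le_left _ _) (le_max_left _ _)
    simp only [hA, hB]; linarith
  have hfA : f₂ A < M + ε/3 :=
    lt_of_le_of_lt (h₂m.monotone (by simp only [hA]; nlinarith [min_le_left a b] : A ≤ a)) ha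
  have hfB : L - ε/3 < f₂ B :=
    lt_of_lt_of_le hb (h₂m.monotone (by simp only [hB]; nlinarith [le_max_right a b] : b ≤ B))
  -- uniform continuity of f₂ on [A,B]
  have hUC : UniformContinuousOn f₂ (Icc A B) :=
    isCompact_Icc.uniformContinuousOn_of_continuous h₂c.continuousOn
  obtain ⟨η, hη, hηP⟩ := Metric.uniformContinuousOn_iff.1 hUC (ε/3) (by linarith)
  obtain ⟨δ, hδ, hδP⟩ := invUC f₁ h₁c h₁m A B η hη
  refine ⟨δ, hδ, ?_⟩
  have key : ∀ s t, s ≤ t → |f₁ s - f₁ t| < δ → |f₂ s - f₂ t| < ε := by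
    intro s t hst h1
    set s' := max A (min s B) with hs'
    set t' := max A (min t B) with ht'
    have hs'mem : s' ∈ Icc A B := ⟨le_max_left _ _, max_le hAB.le (min_le_right _ _)⟩
    have ht'mem : t' ∈ Icc A B := ⟨le_max_left _ _, max_le hAB.le (min_le_right _ _)⟩
    have hmap : ∀ c : ℝ, f₁ (max A (min c B)) = max (f₁ A) (min (f₁ c) (f₁ B)) := by
      intro c
      rw [h₁m.monotone.map_max, h₁m.monotone.map_min]
    have hf1 : |f₁ s' - f₁ t'| < δ := by
      rw [hs', ht', hmap, hmap]
      exact lt_of_le_of_lt (clamp_lip _ _ _ _) h1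
    have hd' : |s' - t'| < η := hδP _ _ hs'mem ht'mem hf1
    have h2 : |f₂ s' - f₂ t'| < ε/3 := by
      have := hηP s' hs'mem t' ht'mem (by rwa [Real.dist_eq])
      rwa [Real.dist_eq] at this
    have hL : ∀ x, f₂ x ≤ L := fun x => le_csSup hbdd ⟨x, rfl⟩
    have hM : ∀ x, M ≤ f₂ x := fun x => csInf_le hbddb ⟨x, rfl⟩
    have h3 : f₂ t - f₂ t' < ε/3 := by
      rcases le_total t B with h | h
      · have : t ≤ t' := by
          rw [ht', min_eq_left h]; exact le_max_right _ _
        have := h₂m.monotone this; linarith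
      · have : t' = B := by rw [ht', min_eq_right h, max_eq_right hAB.le]
        rw [this]
        have := hL t; linarith
    have h4 : f₂ s' - f₂ s < ε/3 := by
      rcases le_total A s with h | h
      · have : s' ≤ s := by
          rw [hs']; exact max_le h (min_le_left _ _)
        have := h₂m.monotone this; linarith
      · have : s' = A := by
          rw [hs', min_eq_left (h.trans hAB.le), max_eq_left h]
        rw [this]
        have := hM s; linarith
    have h0 : f₂ s ≤ f₂ t := h₂m.monotone hst
    have habs := abs_lt.1 h2
    rw [abs_of_nonpos (by linarith)]
    linarith
  intro s t h1
  rcases le_total s t with h | h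
  · exact key s t h h1
  · rw [abs_sub_comm] at h1 ⊢
    exact key t s h h1

/-- Lift the 1D transfer property to the coordinatewise Euclidean-type metrics on `ℝ^k`. -/
lemma dimlift (g₁ g₂ : ℝ → ℝ)
    (H : ∀ ε : ℝ, 0 < ε → ∃ δ : ℝ, 0 < δ ∧ ∀ s t, |g₁ s - g₁ t| < δ → |g₂ s - g₂ t| < ε)
    (k : ℕ) :
    ∀ ε : ℝ, 0 < ε → ∃ δ : ℝ, 0 < δ ∧ ∀ x y : Fin k → ℝ,
      Real.sqrt (∑ i, (g₁ (x i) - g₁ (y i)) ^ 2) < δ →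
      Real.sqrt (∑ i, (g₂ (x i) - g₂ (y i)) ^ 2) < ε := by
  intro ε hε
  set ε' := ε / (Real.sqrt k + 1) with hε'
  have hsk : (0:ℝ) ≤ Real.sqrt k := Real.sqrt_nonneg _
  have hε'pos : 0 < ε' := div_pos hε (by linarith)
  obtain ⟨δ, hδ, hδP⟩ := H ε' hε'pos
  refine ⟨δ, hδ, fun x y h => ?_⟩
  have hcoord : ∀ i, |g₁ (x i) - g₁ (y i)| < δ := by
    intro i
    have h1 : (g₁ (x i) - g₁ (y i)) ^ 2 ≤ ∑ j, (g₁ (x j) - g₁ (y j)) ^ 2 :=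
      Finset.single_le_sum (f := fun j => (g₁ (x j) - g₁ (y j)) ^ 2) (fun j _ => sq_nonneg _) (Finset.mem_univ i)
    calc |g₁ (x i) - g₁ (y i)| = Real.sqrt ((g₁ (x i) - g₁ (y i)) ^ 2) :=
          (Real.sqrt_sq_eq_abs _).symm
      _ ≤ Real.sqrt (∑ j, (g₁ (x j) - g₁ (y j)) ^ 2) := Real.sqrt_le_sqrt h1
      _ < δ := h
  have hsum : ∑ i, (g₂ (x i) - g₂ (y i)) ^ 2 ≤ (k : ℝ) * ε' ^ 2 := by
    calc ∑ i, (g₂ (x i) - g₂ (y i)) ^ 2 ≤ ∑ _i : Fin k, ε' ^ 2 := by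
          apply Finset.sum_le_sum
          intro i _
          have := (hδP _ _ (hcoord i)).le
          calc (g₂ (x i) - g₂ (y i)) ^ 2 = |g₂ (x i) - g₂ (y i)| ^ 2 := (sq_abs _).symm
            _ ≤ ε' ^ 2 := pow_le_pow_left₀ (abs_nonneg _) this 2
      _ = (k : ℝ) * ε' ^ 2 := by simp [mul_comm]
  have h5 : Real.sqrt (∑ i, (g₂ (x i) - g₂ (y i)) ^ 2) ≤ Real.sqrt k * ε' := by
    calc Real.sqrt (∑ i, (g₂ (x i) - g₂ (y i)) ^ 2) ≤ Real.sqrt ((k : ℝ) * ε' ^ 2) :=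
          Real.sqrt_le_sqrt hsum
      _ = Real.sqrt k * ε' := by
          rw [Real.sqrt_mul (Nat.cast_nonneg k), Real.sqrt_sq hε'pos.le]
  have h6 : Real.sqrt k * ε' < ε := by
    rw [hε', mul_div_assoc', div_lt_iff₀ (by linarith : (0:ℝ) < Real.sqrt k + 1)]
    nlinarith
  linarith

/-- **Uniform equivalence of continuous bounded f-metrics.** For continuous, strictly
increasing, bounded `f₁, f₂ : ℝ → ℝ` extended coordinatewise to `ℝ^k`, the metrics
`d_{f₁}(x,y) = ‖f₁(x) − f₁(y)‖₂` and `d_{f₂}` are uniformly equivalent: the identity map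
`(ℝ^k, d_{f₁}) → (ℝ^k, d_{f₂})` and its inverse are both uniformly continuous. -/
theorem uniform_equivalence_of_bounded_f_metrics
    (f₁ f₂ : ℝ → ℝ)
    (h₁c : Continuous f₁) (h₁m : StrictMono f₁) (h₁b : ∃ K : ℝ, ∀ x, |f₁ x| ≤ K)
    (h₂c : Continuous f₂) (h₂m : StrictMono f₂) (h₂b : ∃ K : ℝ, ∀ x, |f₂ x| ≤ K)
    (k : ℕ) (hk : 1 ≤ k) :
    (∀ ε : ℝ, 0 < ε → ∃ δ : ℝ, 0 < δ ∧ ∀ x y : Fin k → ℝ,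
      Real.sqrt (∑ i, (f₁ (x i) - f₁ (y i)) ^ 2) < δ →
      Real.sqrt (∑ i, (f₂ (x i) - f₂ (y i)) ^ 2) < ε) ∧
    (∀ ε : ℝ, 0 < ε → ∃ δ : ℝ, 0 < δ ∧ ∀ x y : Fin k → ℝ,
      Real.sqrt (∑ i, (f₂ (x i) - f₂ (y i)) ^ 2) < δ →
      Real.sqrt (∑ i, (f₁ (x i) - f₁ (y i)) ^ 2) < ε) := by
  constructor
  · exact dimlift f₁ f₂ (transfer1D f₁ f₂ h₁c h₁m h₂c h₂m h₂b) k
  · exact dimlift f₂ f₁ (transfer1D f₂ f₁ h₂c h₂m h₁c h₁m h₁b) k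
end

section
/- Let f : ℝ → ℝ be continuous, strictly increasing, and bounded, and let X_n and Y_n be sequences of real random variables with X_n ↔_f Y_n. Suppose there is a constant M such that |X_n| ≤ M and |Y_n| ≤ M almost surely for all n. Then |X_n − Y_n| → 0 in probability. -/
open MeasureTheory Filter Topology

namespace StrictMono

variable {f : ℝ → ℝ}

lemma exists_pos_lt_sub_of_add_lt (hf : StrictMono f) (hc : Continuous f) {s : Set ℝ}
    (hs : IsCompact s) {δ : ℝ} (hδ : 0 < δ) :
    ∃ ε > 0, ∀ y ∈ s, ∀ x, y + δ < x → ε < f x - f y := by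
  obtain ⟨ε, hε, hle⟩ := hs.exists_forall_le' (f := fun t => f (t + δ) - f t)
    (by fun_prop) fun t _ => sub_pos.2 (hf (lt_add_of_pos_right t hδ))
  exact ⟨ε, hε, fun y hy x hx => (hle y hy).trans_lt (by linarith [hf hx])⟩

lemma exists_pos_lt_abs_sub_of_lt_abs_sub (hf : StrictMono f) (hc : Continuous f) (M : ℝ)
    {δ : ℝ} (hδ : 0 < δ) :
    ∃ ε > 0, ∀ x y, |x| ≤ M → |y| ≤ M → δ < |x - y| → ε < |f x - f y| := by
  obtain ⟨ε, hε, hgap⟩ := hf.exists_pos_lt_sub_of_add_lt hc (isCompact_Icc (a := -M) (b := M)) hδ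
  refine ⟨ε, hε, fun x y hx hy hxy => ?_⟩
  rcases lt_abs.1 hxy with hxy | hyx
  · exact (hgap y (abs_le.1 hy) x (by linarith)).trans_le (le_abs_self _)
  · calc ε < f y - f x := hgap x (abs_le.1 hx) y (by linarith)
      _ = -(f x - f y) := by ring
      _ ≤ |f x - f y| := neg_le_abs _

end StrictMono

theorem fconv_to_ordinary_convergence_of_bounded_general
    (f : ℝ → ℝ) (hf_cont : Continuous f) (hf_mono : StrictMono f)
    {Ω : Type*} [MeasurableSpace Ω] (μ : Measure Ω)
    (X Y : ℕ → Ω → ℝ) (hXY : FConvergesTo f μ X Y)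
    (M : ℝ) (hX : ∀ n, ∀ᵐ ω ∂μ, |X n ω| ≤ M) (hY : ∀ n, ∀ᵐ ω ∂μ, |Y n ω| ≤ M) :
    ∀ δ : ℝ, 0 < δ →
      Tendsto (fun n => μ {ω | δ < |X n ω - Y n ω|}) atTop (𝓝 0) := by
  intro δ hδ
  obtain ⟨ε, hε, hsep⟩ := hf_mono.exists_pos_lt_abs_sub_of_lt_abs_sub hf_cont M hδ
  refine tendsto_of_tendsto_of_tendsto_of_le_of_le tendsto_const_nhds (hXY ε hε)
    (fun _ => zero_le) fun n => measure_mono_ae ?_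
  filter_upwards [hX n, hY n] with ω hx hy using hsep _ _ hx hy

/-- **f-convergence implies ordinary convergence for bounded sequences.** If `f` is
continuous, strictly increasing and bounded, `X_n ↔_f Y_n`, and `|X_n|, |Y_n| ≤ M` a.s.,
then `|X_n − Y_n| → 0` in probability. -/
theorem fconv_to_ordinary_convergence_of_bounded
    (f : ℝ → ℝ) (hf_cont : Continuous f) (hf_mono : StrictMono f)
    (hf_bdd : ∃ K : ℝ, ∀ x, |f x| ≤ K)
    {Ω : Type*} [MeasurableSpace Ω] (μ : Measure Ω) [IsProbabilityMeasure μ]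
    (X Y : ℕ → Ω → ℝ) (hXY : FConvergesTo f μ X Y)
    (M : ℝ) (hX : ∀ n, ∀ᵐ ω ∂μ, |X n ω| ≤ M) (hY : ∀ n, ∀ᵐ ω ∂μ, |Y n ω| ≤ M) :
    ∀ δ : ℝ, 0 < δ →
      Tendsto (fun n => μ {ω | δ < |X n ω - Y n ω|}) atTop (𝓝 0) :=
  fconv_to_ordinary_convergence_of_bounded_general f hf_cont hf_mono μ X Y hXY M hX hY
end
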